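/- arXiv:1708.04902 — 4 statements merged into one kernel-verified Lean document; each statement's English description precedes it below -/
import Mathlib

section
/- For every point x in ℝ^d × {0} and every radius 0 < r ≤ 1, the measure μ_α of the ball B(x,r) intersected with the upper half-space ℝ^d × (0,∞) is comparable to r^{d+1+α}, i.e., there exist constants c, C > 0 depending only on d and α such that c·r^{d+1+α} ≤ μ_α(B(x,r) ∩ ℝ^{d+1}_+) ≤ C·r^{d+1+α}. -/
open MeasureTheory ENNReal Set Metric Filter
open scoped NNReal Classical

noncomputable section

abbrev Rd (d : ℕ) := Fin d → ℝ

/-- Dyadic (half-open) cube of scale `2^(-k)` with corner index `m`. -/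
def dyadicCube (d : ℕ) (k : ℤ) (m : Fin d → ℤ) : Set (Rd d) :=
  {x | ∀ i, (2:ℝ)^(-k) * (m i) < x i ∧ x i ≤ (2:ℝ)^(-k) * ((m i) + 1)}

/-- Neighbouring dyadic cubes: comparable side lengths and touching closures. -/
def Nbr (d : ℕ) (k : ℤ) (m : Fin d → ℤ) (k' : ℤ) (m' : Fin d → ℤ) : Prop :=
  |k - k'| ≤ 1 ∧ (closure (dyadicCube d k m) ∩ closure (dyadicCube d k' m')).Nonempty

/-- Average of `f` over `A` with respect to `μ`. -/
def avg {X : Type*} [MeasurableSpace X] (μ : Measure X) (A : Set X) (f : X → ℝ) : ℝ :=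
  ⨍ x in A, f x ∂μ

/-- Index of the dyadic cube of scale `2^(-k)` containing `x`. -/
def dyadicIdx (d : ℕ) (k : ℤ) (x : Rd d) : Fin d → ℤ := fun i => ⌈x i * (2:ℝ)^k⌉ - 1

def upperHalf (d : ℕ) : Set (Rd (d+1)) := {x | 0 < x (Fin.last d)}

/-- The measure with density `min(1,|x_{d+1}|)^α` on the upper half space. -/
def muAlpha (d : ℕ) (α : ℝ) : Measure (Rd (d+1)) :=
  (volume.restrict (upperHalf d)).withDensity
    fun x => ENNReal.ofReal ((min 1 |x (Fin.last d)|) ^ α)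

/-- The `k`-th level sum in the dyadic Besov energy over `(ℝ^d, μ)`. -/
def besovLevel (d : ℕ) (p : ℝ) (μ : Measure (Rd d)) (f : Rd d → ℝ) (k : ℕ) : ℝ≥0∞ :=
  ∑' m : Fin d → ℤ, μ (dyadicCube d k m) *
    ∑' t : ℤ × (Fin d → ℤ),
      if Nbr d k m t.1 t.2 then
        ENNReal.ofReal (|avg μ (dyadicCube d k m) f - avg μ (dyadicCube d t.1 t.2) f| ^ p)
      else 0

/-- Dyadic Besov energy over `(ℝ^d, μ)` (with the usual modification for `q = ∞`). -/
def besovEnergy (d : ℕ) (s p : ℝ) (q : ℝ≥0∞) (μ : Measure (Rd d)) (f : Rd d → ℝ) : ℝ≥0∞ :=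
  if q = ∞ then
    ⨆ k : ℕ, ENNReal.ofReal ((2:ℝ) ^ ((k:ℝ) * s)) * (besovLevel d p μ f k) ^ (1/p)
  else
    (∑' k : ℕ,
      (ENNReal.ofReal ((2:ℝ) ^ ((k:ℝ) * s)) * (besovLevel d p μ f k) ^ (1/p)) ^ q.toReal)
      ^ (1 / q.toReal)

/-- Dyadic Besov quasinorm over `(ℝ^d, μ)`. -/
def besovNorm (d : ℕ) (s p : ℝ) (q : ℝ≥0∞) (μ : Measure (Rd d)) (f : Rd d → ℝ) : ℝ≥0∞ :=
  eLpNorm f (ENNReal.ofReal p) μ + besovEnergy d s p q μ f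

/-- The `k`-th level sum in the dyadic Besov energy over the weighted upper half space,
where only dyadic cubes contained in the upper half space are taken into account. -/
def besovLevelUp (d : ℕ) (α p : ℝ) (f : Rd (d+1) → ℝ) (k : ℕ) : ℝ≥0∞ :=
  ∑' m : Fin (d+1) → ℤ,
    if 0 ≤ m (Fin.last d) then
      (muAlpha d α) (dyadicCube (d+1) k m) *
        ∑' t : ℤ × (Fin (d+1) → ℤ),
          if Nbr (d+1) k m t.1 t.2 ∧ 0 ≤ t.2 (Fin.last d) then
            ENNReal.ofReal (|avg (muAlpha d α) (dyadicCube (d+1) k m) f -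
              avg (muAlpha d α) (dyadicCube (d+1) t.1 t.2) f| ^ p)
          else 0
    else 0

/-- Dyadic Besov energy over `(ℝ^{d+1}_+, μ_α)`. -/
def besovEnergyUp (d : ℕ) (α s p : ℝ) (q : ℝ≥0∞) (f : Rd (d+1) → ℝ) : ℝ≥0∞ :=
  if q = ∞ then
    ⨆ k : ℕ, ENNReal.ofReal ((2:ℝ) ^ ((k:ℝ) * s)) * (besovLevelUp d α p f k) ^ (1/p)
  else
    (∑' k : ℕ,
      (ENNReal.ofReal ((2:ℝ) ^ ((k:ℝ) * s)) * (besovLevelUp d α p f k) ^ (1/p)) ^ q.toReal)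
      ^ (1 / q.toReal)

/-- Dyadic Besov quasinorm over `(ℝ^{d+1}_+, μ_α)`. -/
def besovNormUp (d : ℕ) (α s p : ℝ) (q : ℝ≥0∞) (f : Rd (d+1) → ℝ) : ℝ≥0∞ :=
  eLpNorm f (ENNReal.ofReal p) (muAlpha d α) + besovEnergyUp d α s p q f

/-- The inner (in `x`) quantity of the dyadic Triebel-Lizorkin energy over `(ℝ^d, μ)`. -/
def tlInner (d : ℕ) (s : ℝ) (q : ℝ≥0∞) (μ : Measure (Rd d)) (f : Rd d → ℝ) (x : Rd d) : ℝ≥0∞ :=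
  if q = ∞ then
    ⨆ k : ℕ, ⨆ t : ℤ × (Fin d → ℤ),
      (if Nbr d k (dyadicIdx d k x) t.1 t.2 then
        ENNReal.ofReal ((2:ℝ) ^ ((k:ℝ) * s) *
          |avg μ (dyadicCube d k (dyadicIdx d k x)) f - avg μ (dyadicCube d t.1 t.2) f|)
      else 0)
  else
    ∑' k : ℕ, ∑' t : ℤ × (Fin d → ℤ),
      if Nbr d k (dyadicIdx d k x) t.1 t.2 then
        ENNReal.ofReal ((2:ℝ) ^ ((k:ℝ) * s * q.toReal) *
          |avg μ (dyadicCube d k (dyadicIdx d k x)) f - avg μ (dyadicCube d t.1 t.2) f| ^ q.toReal)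
      else 0

/-- Dyadic Triebel-Lizorkin energy over `(ℝ^d, μ)`. -/
def tlEnergy (d : ℕ) (s p : ℝ) (q : ℝ≥0∞) (μ : Measure (Rd d)) (f : Rd d → ℝ) : ℝ≥0∞ :=
  if q = ∞ then ∫⁻ x, (tlInner d s q μ f x) ^ p ∂μ
  else ∫⁻ x, (tlInner d s q μ f x) ^ (p / q.toReal) ∂μ

/-- Dyadic Triebel-Lizorkin quasinorm over `(ℝ^d, μ)`. -/
def tlNorm (d : ℕ) (s p : ℝ) (q : ℝ≥0∞) (μ : Measure (Rd d)) (f : Rd d → ℝ) : ℝ≥0∞ :=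
  eLpNorm f (ENNReal.ofReal p) μ + tlEnergy d s p q μ f

/-- The inner quantity of the dyadic Triebel-Lizorkin energy over `(ℝ^{d+1}_+, μ_α)`,
with neighbours restricted to cubes contained in the upper half space. -/
def tlInnerUp (d : ℕ) (α s : ℝ) (q : ℝ≥0∞) (f : Rd (d+1) → ℝ) (x : Rd (d+1)) : ℝ≥0∞ :=
  if q = ∞ then
    ⨆ k : ℕ, ⨆ t : ℤ × (Fin (d+1) → ℤ),
      (if Nbr (d+1) k (dyadicIdx (d+1) k x) t.1 t.2 ∧ 0 ≤ t.2 (Fin.last d) then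
        ENNReal.ofReal ((2:ℝ) ^ ((k:ℝ) * s) *
          |avg (muAlpha d α) (dyadicCube (d+1) k (dyadicIdx (d+1) k x)) f -
            avg (muAlpha d α) (dyadicCube (d+1) t.1 t.2) f|)
      else 0)
  else
    ∑' k : ℕ, ∑' t : ℤ × (Fin (d+1) → ℤ),
      if Nbr (d+1) k (dyadicIdx (d+1) k x) t.1 t.2 ∧ 0 ≤ t.2 (Fin.last d) then
        ENNReal.ofReal ((2:ℝ) ^ ((k:ℝ) * s * q.toReal) *
          |avg (muAlpha d α) (dyadicCube (d+1) k (dyadicIdx (d+1) k x)) f -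
            avg (muAlpha d α) (dyadicCube (d+1) t.1 t.2) f| ^ q.toReal)
      else 0

/-- Dyadic Triebel-Lizorkin energy over `(ℝ^{d+1}_+, μ_α)`. -/
def tlEnergyUp (d : ℕ) (α s p : ℝ) (q : ℝ≥0∞) (f : Rd (d+1) → ℝ) : ℝ≥0∞ :=
  if q = ∞ then ∫⁻ x, (tlInnerUp d α s q f x) ^ p ∂(muAlpha d α)
  else ∫⁻ x, (tlInnerUp d α s q f x) ^ (p / q.toReal) ∂(muAlpha d α)

/-- Dyadic Triebel-Lizorkin quasinorm over `(ℝ^{d+1}_+, μ_α)`. -/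
def tlNormUp (d : ℕ) (α s p : ℝ) (q : ℝ≥0∞) (f : Rd (d+1) → ℝ) : ℝ≥0∞ :=
  eLpNorm f (ENNReal.ofReal p) (muAlpha d α) + tlEnergyUp d α s p q f

/-- The Whitney cube `W(Q) = Q × (2^{-k}, 2^{-k+1}]` over the dyadic cube `Q` of scale `2^{-k}`. -/
def whitneyCube (d : ℕ) (k : ℕ) (m : Fin d → ℤ) : Set (Rd (d+1)) :=
  dyadicCube (d+1) k (Fin.snoc m 1)

/-- The prism `N(Q) = Q × (0, 2^{-k}]` over the dyadic cube `Q` of scale `2^{-k}`. -/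
def nprism (d : ℕ) (k : ℕ) (m : Fin d → ℤ) : Set (Rd (d+1)) :=
  dyadicCube (d+1) k (Fin.snoc m 0)

/-- The `(5/4)`-dilate `𝒩(Q)` of the Whitney cube `W(Q)`:
the open `ℓ(Q)/4`-neighbourhood of `W(Q)`. -/
def nnbhd (d : ℕ) (k : ℕ) (m : Fin d → ℤ) : Set (Rd (d+1)) :=
  {y | Metric.infDist y (whitneyCube d k m) < (2:ℝ)^(-(k:ℤ)) / 4}

/-- A smooth partition of unity subordinate to the Whitney decomposition of
`ℝ^d × (0,1]`, with Lipschitz constants `L · 2^k`. -/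
structure WhitneyPOU (d : ℕ) (L : ℝ≥0) where
  psi : ℕ → (Fin d → ℤ) → Rd (d+1) → ℝ
  smooth : ∀ k m, ContDiff ℝ (⊤ : ℕ∞) (psi k m)
  nonneg : ∀ k m x, 0 ≤ psi k m x
  le_one : ∀ k m x, psi k m x ≤ 1
  lipschitz : ∀ k m, LipschitzWith (L * 2^k) (psi k m)
  support_subset : ∀ k m x, psi k m x ≠ 0 → x ∈ nnbhd d k m
  partition : ∀ x ∈ ⋃ (k : ℕ) (m : Fin d → ℤ), whitneyCube d k m,
      ∑' t : ℕ × (Fin d → ℤ), psi t.1 t.2 x = 1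

/-- The Whitney extension of `f : ℝ^d → ℝ` to the upper half space. -/
def whitneyExt (d : ℕ) {L : ℝ≥0} (P : WhitneyPOU d L) (f : Rd d → ℝ) (x : Rd (d+1)) : ℝ :=
  ∑' t : ℕ × (Fin d → ℤ), (avg volume (dyadicCube d t.1 t.2) f) * P.psi t.1 t.2 x

/-- The averaging operator `T_k` built from `μ_α`-averages over the prisms `N(Q)`. -/
def Tk (d : ℕ) (α : ℝ) (f : Rd (d+1) → ℝ) (k : ℕ) (x : Rd d) : ℝ :=
  avg (muAlpha d α) (nprism d k (dyadicIdx d k x)) f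

/-- The averaging operator `𝒯_k` built from Lebesgue averages over the dilated
Whitney cubes `𝒩(Q)`. -/
def TkVol (d : ℕ) (f : Rd (d+1) → ℝ) (k : ℕ) (x : Rd d) : ℝ :=
  avg volume (nnbhd d k (dyadicIdx d k x)) f

/-- The weighted Sobolev norm on the upper half space. -/
def sobolevNormUp (d : ℕ) (p α : ℝ) (f : Rd (d+1) → ℝ) : ℝ≥0∞ :=
  eLpNorm f (ENNReal.ofReal p) (muAlpha d α) +
    eLpNorm (fun x => ‖fderiv ℝ f x‖) (ENNReal.ofReal p) (muAlpha d α)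

lemma measurableSet_upperHalf (d : ℕ) : MeasurableSet (upperHalf d) :=
  measurableSet_lt measurable_const (measurable_pi_apply _)

lemma ball_inter_upper (d : ℕ) (x : Rd d) {r : ℝ} (hr : 0 < r) :
    Metric.ball (Fin.snoc x (0:ℝ)) r ∩ upperHalf d =
      Set.univ.pi (fun i => Ioo ((Fin.snoc (fun j => x j - r) 0 : Fin (d+1) → ℝ) i)
        ((Fin.snoc (fun j => x j + r) r : Fin (d+1) → ℝ) i)) := by
  ext y
  simp only [mem_inter_iff, mem_ball, dist_pi_lt_iff hr, upperHalf, mem_setOf_eq,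
    Set.mem_pi, Set.mem_univ, forall_true_left, mem_Ioo]
  simp only [Real.dist_eq]
  constructor
  · rintro ⟨hb, hu⟩ i
    refine Fin.lastCases ?_ (fun j => ?_) i
    · have h1 := hb (Fin.last d)
      rw [Fin.snoc_last, sub_zero] at h1
      simp only [Fin.snoc_last]
      exact ⟨hu, lt_of_abs_lt h1⟩
    · have h1 := hb (Fin.castSucc j)
      rw [Fin.snoc_castSucc] at h1
      have h2 := abs_lt.1 h1
      simp only [Fin.snoc_castSucc]
      constructor <;> linarith [h2.1, h2.2]
  · intro h
    have hl := h (Fin.last d)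
    simp only [Fin.snoc_last] at hl
    refine ⟨fun i => ?_, hl.1⟩
    refine Fin.lastCases ?_ (fun j => ?_) i
    · rw [Fin.snoc_last, sub_zero, abs_lt]
      exact ⟨by linarith [hl.1], hl.2⟩
    · have hj := h (Fin.castSucc j)
      simp only [Fin.snoc_castSucc] at hj
      rw [Fin.snoc_castSucc, abs_lt]
      constructor <;> linarith [hj.1, hj.2]

lemma muAlpha_ball_eq (d : ℕ) (α : ℝ) (hα : -1 < α) (x : Rd d) {r : ℝ}
    (hr : 0 < r) (hr1 : r ≤ 1) :
    muAlpha d α (Metric.ball (Fin.snoc x 0) r) =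
      ENNReal.ofReal ((2:ℝ)^d / (α + 1) * r ^ ((d:ℝ) + 1 + α)) := by
  have hα1 : (0:ℝ) < α + 1 := by linarith
  set g : ℝ → ℝ≥0∞ := fun t => ENNReal.ofReal ((min 1 |t|) ^ α) with hg
  have hgm : Measurable g := by
    apply Measurable.ennreal_ofReal
    exact ((measurable_const.min measurable_abs)).pow measurable_const
  set S := Set.univ.pi (fun i => Ioo ((Fin.snoc (fun j => x j - r) 0 : Fin (d+1) → ℝ) i)
        ((Fin.snoc (fun j => x j + r) r : Fin (d+1) → ℝ) i)) with hSdef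
  have hSm : MeasurableSet S := MeasurableSet.univ_pi fun i => measurableSet_Ioo
  have h1 : muAlpha d α (Metric.ball (Fin.snoc x 0) r)
      = ∫⁻ y in S, g (y (Fin.last d)) ∂volume := by
    rw [muAlpha, withDensity_apply _ measurableSet_ball,
      Measure.restrict_restrict measurableSet_ball, ball_inter_upper d x hr]
  rw [h1, ← lintegral_indicator hSm]
  set e := MeasurableEquiv.piFinSuccAbove (fun _ : Fin (d+1) => ℝ) (Fin.last d) with he
  have hmp := (MeasureTheory.volume_preserving_piFinSuccAbove
      (fun _ : Fin (d+1) => ℝ) (Fin.last d)).symm e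
  rw [← hmp.lintegral_comp_emb (MeasurableEquiv.measurableEmbedding _)]
  have hcomp : ∀ p : ℝ × (Fin d → ℝ),
      S.indicator (fun y => g (y (Fin.last d))) (e.symm p) =
        (Set.indicator (Ioo (0:ℝ) r) g p.1) *
        (Set.indicator (Set.univ.pi fun j : Fin d => Ioo (x j - r) (x j + r))
          (fun _ => (1:ℝ≥0∞)) p.2) := by
    rintro ⟨t, z⟩
    have hes : e.symm (t, z) = Fin.snoc z t := by
      simp [he, MeasurableEquiv.piFinSuccAbove, Fin.insertNthEquiv,
        Fin.insertNth_last']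
    rw [hes]
    have hmem : (Fin.snoc z t : Fin (d+1) → ℝ) ∈ S ↔
        t ∈ Ioo (0:ℝ) r ∧ z ∈ (Set.univ.pi fun j : Fin d => Ioo (x j - r) (x j + r)) := by
      simp only [hSdef, Set.mem_pi, Set.mem_univ, forall_true_left]
      rw [Fin.forall_iff_succAbove (Fin.last d)]
      simp [Fin.succAbove_last, Fin.snoc_last, Fin.snoc_castSucc]
    by_cases h : (Fin.snoc z t : Fin (d+1) → ℝ) ∈ S
    · rw [Set.indicator_of_mem h]
      obtain ⟨h1', h2'⟩ := hmem.1 h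
      rw [Set.indicator_of_mem h1', Set.indicator_of_mem h2', Fin.snoc_last, mul_one]
    · rw [Set.indicator_of_notMem h]
      rw [hmem, not_and_or] at h
      rcases h with h | h
      · rw [Set.indicator_of_notMem h, zero_mul]
      · rw [Set.indicator_of_notMem h, mul_zero]
  simp only [hcomp]
  rw [Measure.volume_eq_prod _ _, lintegral_prod_mul
      ((hgm.indicator measurableSet_Ioo).aemeasurable)
      ((measurable_const.indicator (MeasurableSet.univ_pi fun _ => measurableSet_Ioo)).aemeasurable)]
  have hvol : (∫⁻ z : Fin d → ℝ, (Set.univ.pi fun j : Fin d => Ioo (x j - r) (x j + r)).indicator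
      (fun _ => (1:ℝ≥0∞)) z ∂volume) = ENNReal.ofReal ((2*r)^d) := by
    rw [lintegral_indicator (MeasurableSet.univ_pi fun _ => measurableSet_Ioo),
      setLIntegral_one, volume_pi_pi]
    have : ∀ j : Fin d, (volume (Ioo (x j - r) (x j + r))) = ENNReal.ofReal (2*r) := by
      intro j; rw [Real.volume_Ioo]; ring_nf
    rw [Finset.prod_congr rfl (fun j _ => this j), Finset.prod_const, Finset.card_univ,
      Fintype.card_fin, ← ENNReal.ofReal_pow (by positivity)]
  have hone : (∫⁻ t : ℝ, (Ioo (0:ℝ) r).indicator g t ∂volume)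
      = ENNReal.ofReal (r ^ (α+1) / (α+1)) := by
    rw [lintegral_indicator measurableSet_Ioo]
    have hcg : ∀ t ∈ Ioo (0:ℝ) r, g t = ENNReal.ofReal (t ^ α) := by
      intro t ht
      have h1' : |t| = t := abs_of_pos ht.1
      have h2' : min 1 t = t := min_eq_right (le_trans ht.2.le hr1)
      rw [hg]; simp only [h1', h2']
    rw [setLIntegral_congr_fun measurableSet_Ioo hcg]
    have hint : IntegrableOn (fun t : ℝ => t ^ α) (Ioo 0 r) volume := by
      exact (intervalIntegral.intervalIntegrable_rpow' hα (a := 0) (b := r)).1.mono_set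
        Ioo_subset_Ioc_self
    rw [← MeasureTheory.ofReal_integral_eq_lintegral_ofReal hint]
    · congr 1
      rw [← MeasureTheory.integral_Ioc_eq_integral_Ioo,
        ← intervalIntegral.integral_of_le hr.le, integral_rpow (Or.inl hα),
        Real.zero_rpow (by linarith), sub_zero]
    · filter_upwards [self_mem_ae_restrict measurableSet_Ioo] with t ht
      exact Real.rpow_nonneg ht.1.le α
  rw [hone, hvol, ← ENNReal.ofReal_mul (by positivity)]
  congr 1
  have h2 : r ^ ((d:ℝ) + 1 + α) = r ^ (d:ℕ) * r * r ^ α := by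
    rw [Real.rpow_add hr, Real.rpow_add hr, Real.rpow_one, Real.rpow_natCast]
  have h3 : r ^ (α + 1) = r ^ α * r := by rw [Real.rpow_add hr, Real.rpow_one]
  rw [h3, h2, mul_pow]
  field_simp

/-- for boundary points `x` and radii `0 < r ≤ 1`,
`μ_α(B((x,0),r) ∩ ℝ^{d+1}_+) ≈ r^{d+1+α}`. -/
theorem stmt0 (d : ℕ) (hd : 1 ≤ d) (α : ℝ) (hα : -1 < α) :
    ∃ c C : ℝ, 0 < c ∧ 0 < C ∧ ∀ (x : Rd d) (r : ℝ), 0 < r → r ≤ 1 →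
      ENNReal.ofReal (c * r ^ ((d:ℝ) + 1 + α)) ≤
          muAlpha d α (Metric.ball (Fin.snoc x 0) r) ∧
      muAlpha d α (Metric.ball (Fin.snoc x 0) r) ≤
          ENNReal.ofReal (C * r ^ ((d:ℝ) + 1 + α)) := by
  have hα1 : (0:ℝ) < α + 1 := by linarith
  refine ⟨2^d/(α+1), 2^d/(α+1), div_pos (by positivity) hα1, div_pos (by positivity) hα1,
    fun x r hr hr1 => ?_⟩
  rw [muAlpha_ball_eq d α hα x hr hr1]
  exact ⟨le_refl _, le_refl _⟩
end
end

section
/- Let Ω ⊂ ℝ^d be open, μ a doubling measure on Ω giving positive finite measure to all balls intersected with Ω, and 0 < λ < 1. There exists a constant C, depending only on d, the doubling constant of μ, and λ, such that for every cube Q ⊂ Ω and every f ∈ L¹(Q,μ), there exists a subcube Q̃ ⊂ Q with edge length ℓ(Q̃) = λ·ℓ(Q) satisfying ⨍_Q |f − f_{Q,μ}| dμ ≤ C ⨍_{Q̃} |f − f_{Q̃,μ}| dμ, where f_{A,μ} denotes the μ-average of f over A. -/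
open MeasureTheory ENNReal Set Metric Filter
open scoped NNReal Classical

noncomputable section

/-- A closed axis-parallel cube with lower corner `a` and edge length `l`. -/
def cube (d : ℕ) (a : Fin d → ℝ) (l : ℝ) : Set (Rd d) :=
  {x | ∀ i, a i ≤ x i ∧ x i ≤ a i + l}


section SamplingHelpers
open MeasureTheory

variable {d : ℕ}

lemma cube_measurableSet (a : Fin d → ℝ) (l : ℝ) : MeasurableSet (cube d a l) := by
  have : cube d a l = Set.pi Set.univ (fun i => Icc (a i) (a i + l)) := by
    ext x; simp only [cube, Set.mem_univ_pi, Set.mem_Icc, Set.mem_setOf_eq]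
  rw [this]
  exact MeasurableSet.univ_pi fun i => measurableSet_Icc

lemma cube_subset_cube {a p : Fin d → ℝ} {l σ : ℝ}
    (h1 : ∀ i, a i ≤ p i) (h2 : ∀ i, p i + σ ≤ a i + l) :
    cube d p σ ⊆ cube d a l := fun x hx i =>
  ⟨le_trans (h1 i) (hx i).1, le_trans (hx i).2 (h2 i)⟩

lemma ball_subset_cube {p : Fin d → ℝ} {σ : ℝ} (hσ : 0 < σ) :
    ball (fun i => p i + σ/2) (σ/2) ⊆ cube d p σ := by
  intro x hx
  rw [mem_ball, dist_pi_lt_iff (by linarith)] at hx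
  intro i
  have h := abs_lt.1 ((Real.dist_eq _ _) ▸ hx i)
  exact ⟨by linarith [h.1], by linarith [h.2]⟩

lemma cube_subset_ball {p : Fin d → ℝ} {σ : ℝ} (hσ : 0 < σ) :
    cube d p σ ⊆ ball (fun i => p i + σ/2) σ := by
  intro x hx
  rw [mem_ball]
  have h : dist x (fun i => p i + σ/2) ≤ σ/2 := by
    rw [dist_pi_le_iff (by linarith)]
    intro i
    rw [Real.dist_eq, abs_le]
    have h1 := (hx i).1; have h2 := (hx i).2
    constructor <;> linarith
  linarith

lemma dist_le_of_mem_cube {a : Fin d → ℝ} {l : ℝ} (hl : 0 ≤ l) {x y : Rd d}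
    (hx : x ∈ cube d a l) (hy : y ∈ cube d a l) : dist x y ≤ l := by
  rw [dist_pi_le_iff hl]
  intro i
  rw [Real.dist_eq, abs_le]
  have h1 := hx i; have h2 := hy i
  constructor <;> linarith [h1.1, h1.2, h2.1, h2.2]

/-- Local notion of mean oscillation. -/
def oscN {X : Type*} [MeasurableSpace X] (μ : Measure X) (A : Set X) (f : X → ℝ) : ℝ :=
  ⨍ x in A, |f x - avg μ A f| ∂μ

lemma oscN_nonneg {X : Type*} [MeasurableSpace X] (μ : Measure X) {A : Set X}
    (hA : MeasurableSet A) (f : X → ℝ) : 0 ≤ oscN μ A f := by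
  unfold oscN
  rw [setAverage_eq, smul_eq_mul]
  exact mul_nonneg (inv_nonneg.2 ENNReal.toReal_nonneg)
    (setIntegral_nonneg hA fun x _ => abs_nonneg _)

lemma integral_abs_sub_avg {X : Type*} [MeasurableSpace X] (μ : Measure X) {A : Set X}
    (h0 : μ A ≠ 0) (hfin : μ A ≠ ∞) (f : X → ℝ) :
    ∫ x in A, |f x - avg μ A f| ∂μ = (μ A).toReal * oscN μ A f := by
  have ht : 0 < (μ A).toReal := ENNReal.toReal_pos h0 hfin
  unfold oscN
  rw [setAverage_eq, smul_eq_mul, measureReal_def]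
  field_simp

lemma avg_sub_abs_le {X : Type*} [MeasurableSpace X] (μ : Measure X) {P : Set X}
    (h0 : μ P ≠ 0) (hfin : μ P ≠ ∞) {f : X → ℝ} (hf : IntegrableOn f P μ) (c : ℝ) :
    |avg μ P f - c| ≤ ((μ P).toReal)⁻¹ * ∫ x in P, |f x - c| ∂μ := by
  have ht : 0 < (μ P).toReal := ENNReal.toReal_pos h0 hfin
  have hconst : IntegrableOn (fun _ => c) P μ := integrableOn_const hfin
  have h1 : ∫ x in P, (f x - c) ∂μ = (∫ x in P, f x ∂μ) - (μ P).toReal * c := by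
    rw [integral_sub hf hconst, setIntegral_const, smul_eq_mul, measureReal_def]
  have h2 : avg μ P f - c = ((μ P).toReal)⁻¹ * ∫ x in P, (f x - c) ∂μ := by
    show (⨍ x in P, f x ∂μ) - c = _
    rw [setAverage_eq, smul_eq_mul, h1, measureReal_def]
    field_simp
  rw [h2, abs_mul, abs_of_nonneg (inv_nonneg.2 ht.le)]
  have h3 : |∫ x in P, (f x - c) ∂μ| ≤ ∫ x in P, |f x - c| ∂μ := by
    simpa [Real.norm_eq_abs] using
      norm_integral_le_integral_norm (μ := μ.restrict P) (fun x => f x - c)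
  exact mul_le_mul_of_nonneg_left h3 (inv_nonneg.2 ht.le)

lemma avg_diff_le {X : Type*} [MeasurableSpace X] (μ : Measure X) {P A : Set X}
    (hPA : P ⊆ A) (h0 : μ P ≠ 0) (hfin : μ A ≠ ∞) {f : X → ℝ}
    (hf : IntegrableOn f A μ) :
    |avg μ P f - avg μ A f| ≤ (μ A).toReal / (μ P).toReal * oscN μ A f := by
  have hPfin : μ P ≠ ∞ := (lt_of_le_of_lt (measure_mono hPA) hfin.lt_top).ne
  have hA0 : μ A ≠ 0 := fun h => h0 (le_antisymm (h ▸ measure_mono hPA) zero_le)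
  have hconst : IntegrableOn (fun _ => avg μ A f) A μ := integrableOn_const hfin
  have hint : IntegrableOn (fun x => |f x - avg μ A f|) A μ := (hf.sub hconst).abs
  have h1 := avg_sub_abs_le μ h0 hPfin (hf.mono_set hPA) (avg μ A f)
  have h2 : ∫ x in P, |f x - avg μ A f| ∂μ ≤ ∫ x in A, |f x - avg μ A f| ∂μ :=
    setIntegral_mono_set hint (Filter.Eventually.of_forall fun x => abs_nonneg _)
      (HasSubset.Subset.eventuallyLE hPA)
  have h3 := integral_abs_sub_avg μ hA0 hfin f
  calc |avg μ P f - avg μ A f| ≤ ((μ P).toReal)⁻¹ * ∫ x in P, |f x - avg μ A f| ∂μ := h1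
    _ ≤ ((μ P).toReal)⁻¹ * ((μ A).toReal * oscN μ A f) := by
        rw [← h3]; exact mul_le_mul_of_nonneg_left h2 (inv_nonneg.2 ENNReal.toReal_nonneg)
    _ = (μ A).toReal / (μ P).toReal * oscN μ A f := by ring

lemma oscN_le_two_mul {X : Type*} [MeasurableSpace X] (μ : Measure X) {A : Set X}
    (hA : MeasurableSet A) (h0 : μ A ≠ 0) (hfin : μ A ≠ ∞) {f : X → ℝ}
    (hf : IntegrableOn f A μ) (c : ℝ) :
    oscN μ A f ≤ 2 * (((μ A).toReal)⁻¹ * ∫ x in A, |f x - c| ∂μ) := by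
  have ht : 0 < (μ A).toReal := ENNReal.toReal_pos h0 hfin
  have hconstc : IntegrableOn (fun _ => c) A μ := integrableOn_const hfin
  have hintc : IntegrableOn (fun x => |f x - c|) A μ := (hf.sub hconstc).abs
  set av := avg μ A f with hav
  have hconsta : IntegrableOn (fun _ => |c - av|) A μ := integrableOn_const hfin
  have h1 : ∫ x in A, |f x - av| ∂μ ≤ ∫ x in A, (|f x - c| + |c - av|) ∂μ := by
    apply integral_mono ((hf.sub (integrableOn_const hfin)).abs)
      (hintc.add hconsta)
    intro x
    exact abs_sub_le (f x) c av
  have h2 : ∫ x in A, (|f x - c| + |c - av|) ∂μ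
      = (∫ x in A, |f x - c| ∂μ) + (μ A).toReal * |c - av| := by
    rw [integral_add hintc hconsta, setIntegral_const, smul_eq_mul, measureReal_def]
  have h3 : |c - av| ≤ ((μ A).toReal)⁻¹ * ∫ x in A, |f x - c| ∂μ := by
    rw [abs_sub_comm]
    exact avg_sub_abs_le μ h0 hfin hf c
  have h4 := integral_abs_sub_avg μ h0 hfin f
  have h5 : (μ A).toReal * oscN μ A f ≤ 2 * ∫ x in A, |f x - c| ∂μ := by
    rw [← h4]
    have h6 : (μ A).toReal * |c - av| ≤ ∫ x in A, |f x - c| ∂μ := by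
      have := mul_le_mul_of_nonneg_left h3 ht.le
      rwa [mul_inv_cancel_left₀ ht.ne'] at this
    linarith
  have h6 := mul_le_mul_of_nonneg_left h5 (inv_nonneg.2 ht.le)
  have h7 : ((μ A).toReal)⁻¹ * ((μ A).toReal * oscN μ A f) = oscN μ A f := by
    field_simp
  rw [h7, show ((μ A).toReal)⁻¹ * (2 * ∫ x in A, |f x - c| ∂μ)
      = 2 * (((μ A).toReal)⁻¹ * ∫ x in A, |f x - c| ∂μ) from by ring] at h6
  exact h6

end SamplingHelpers

set_option maxHeartbeats 2000000 in
/-- the sampling lemma. -/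
theorem stmt2 (d : ℕ) (hd : 1 ≤ d) (cdbl : ℝ) (lam : ℝ) (hlam0 : 0 < lam) (hlam1 : lam < 1) :
    ∃ C : ℝ, 0 < C ∧
      ∀ (Ω : Set (Rd d)), IsOpen Ω →
      ∀ μ : Measure (Rd d),
        (∀ x ∈ Ω, ∀ r : ℝ, 0 < r →
          0 < μ (ball x r ∩ Ω) ∧ μ (ball x r ∩ Ω) < ∞ ∧
          μ (ball x (2*r) ∩ Ω) ≤ ENNReal.ofReal cdbl * μ (ball x r ∩ Ω)) →
      ∀ (a : Fin d → ℝ) (l : ℝ), 0 < l → cube d a l ⊆ Ω →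
      ∀ f : Rd d → ℝ, IntegrableOn f (cube d a l) μ →
      ∃ b : Fin d → ℝ, cube d b (lam * l) ⊆ cube d a l ∧
        (⨍ x in cube d a l, |f x - avg μ (cube d a l) f| ∂μ) ≤
          C * ⨍ x in cube d b (lam * l), |f x - avg μ (cube d b (lam * l)) f| ∂μ := by
  classical
  obtain ⟨n, hn⟩ := pow_unbounded_of_one_lt (8 / lam) (one_lt_two (α := ℝ))
  obtain ⟨N₀, hN₀⟩ := exists_nat_ge (2 * (1 - lam) / lam)
  set N : ℕ := N₀ + 1 with hNdef
  set Kr : ℝ := (max cdbl 1) ^ n with hKrdef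
  have hKr1 : 1 ≤ Kr := one_le_pow₀ (le_max_right cdbl 1)
  have hKr0 : (0:ℝ) ≤ Kr := zero_le_one.trans hKr1
  set C : ℝ := 2 * ((N:ℝ) + 1) ^ d * (1 + 2 * Kr * ((d:ℝ) * N)) with hCdef
  have hCpos : 0 < C := by
    have h1 : (0:ℝ) < ((N:ℝ) + 1) ^ d := by positivity
    have h2 : (0:ℝ) ≤ 2 * Kr * ((d:ℝ) * N) := by positivity
    nlinarith
  refine ⟨C, hCpos, ?_⟩
  intro Ω hΩ μ hμ a l hl hQΩ f hf
  set s : ℝ := lam * l with hsdef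
  have hs0 : 0 < s := mul_pos hlam0 hl
  have hNpos : (0:ℝ) < N := by positivity
  set hstep : ℝ := (1 - lam) * l / N with hhdef
  have hstep0 : 0 < hstep := div_pos (mul_pos (by linarith) hl) hNpos
  have hstep_le : hstep ≤ s / 2 := by
    rw [hhdef, div_le_div_iff₀ hNpos (by norm_num : (0:ℝ) < 2)]
    have hle : 2 * (1 - lam) / lam ≤ (N:ℝ) := by
      refine le_trans hN₀ ?_
      exact_mod_cast Nat.cast_le.2 (Nat.le_succ N₀)
    have := (div_le_iff₀ hlam0).1 hle
    rw [hsdef]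
    nlinarith
  have hNstep : hstep * N = (1 - lam) * l := by
    rw [hhdef]; field_simp
  -- iterated doubling
  have hdbl : ∀ c ∈ Ω, ∀ r : ℝ, 0 < r → ∀ k : ℕ,
      μ (ball c (2^k * r) ∩ Ω) ≤ (ENNReal.ofReal (max cdbl 1))^k * μ (ball c r ∩ Ω) := by
    intro c hc r hr k
    induction k with
    | zero => simp
    | succ k ih =>
      have h2 : (2:ℝ)^(k+1) * r = 2 * (2^k * r) := by ring
      calc μ (ball c (2^(k+1) * r) ∩ Ω)
          ≤ ENNReal.ofReal cdbl * μ (ball c (2^k * r) ∩ Ω) := by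
            rw [h2]; exact (hμ c hc _ (by positivity)).2.2
        _ ≤ ENNReal.ofReal (max cdbl 1) *
            ((ENNReal.ofReal (max cdbl 1))^k * μ (ball c r ∩ Ω)) :=
            mul_le_mul' (ENNReal.ofReal_le_ofReal (le_max_left _ _)) ih
        _ = (ENNReal.ofReal (max cdbl 1))^(k+1) * μ (ball c r ∩ Ω) := by
            rw [pow_succ]; ring
  -- positivity and finiteness of subcube measures
  have hposfin : ∀ (p : Fin d → ℝ) (σ : ℝ), 0 < σ → cube d p σ ⊆ Ω →
      μ (cube d p σ) ≠ 0 ∧ μ (cube d p σ) ≠ ∞ := by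
    intro p σ hσ hsub
    set c : Rd d := fun i => p i + σ/2 with hcdef
    have hcmem : c ∈ cube d p σ := by
      intro i
      simp only [hcdef]
      constructor <;> linarith
    have hcΩ : c ∈ Ω := hsub hcmem
    obtain ⟨hp1, -, -⟩ := hμ c hcΩ (σ/2) (by linarith)
    obtain ⟨-, hq2, -⟩ := hμ c hcΩ σ hσ
    have hpos : 0 < μ (cube d p σ) :=
      lt_of_lt_of_le hp1 (measure_mono fun x hx => ball_subset_cube hσ hx.1)
    have hfin : μ (cube d p σ) < ∞ :=
      lt_of_le_of_lt (measure_mono fun x hx => Set.mem_inter (cube_subset_ball hσ hx) (hsub hx)) hq2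
    exact ⟨hpos.ne', hfin.ne⟩
  -- measure comparison
  have hcmp : ∀ (p : Fin d → ℝ) (σ : ℝ), 0 < σ → s / 2 ≤ σ → cube d p σ ⊆ cube d a l →
      μ (cube d a l) ≤ ENNReal.ofReal Kr * μ (cube d p σ) := by
    intro p σ hσ hσs hPQ
    set c : Rd d := fun i => p i + σ/2 with hcdef
    have hcmem : c ∈ cube d p σ := by
      intro i
      simp only [hcdef]
      constructor <;> linarith
    have hcQ : c ∈ cube d a l := hPQ hcmem
    have hcΩ : c ∈ Ω := hQΩ hcQ
    have hrpos : 0 < σ/2 := by linarith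
    have hQball : cube d a l ⊆ ball c (2^n * (σ/2)) ∩ Ω := by
      intro x hx
      refine Set.mem_inter ?_ (hQΩ hx)
      rw [mem_ball]
      have hd1 : dist x c ≤ l := dist_le_of_mem_cube hl.le hx hcQ
      have hσ4 : lam * l / 4 ≤ σ/2 := by rw [hsdef] at hσs; linarith
      have h2n : 2 * l < 2^n * (σ/2) := by
        calc 2*l = (8/lam) * (lam * l / 4) := by field_simp; ring
          _ < 2^n * (lam * l / 4) := mul_lt_mul_of_pos_right hn (by positivity)
          _ ≤ 2^n * (σ/2) := mul_le_mul_of_nonneg_left hσ4 (by positivity)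
      linarith
    calc μ (cube d a l) ≤ μ (ball c (2^n * (σ/2)) ∩ Ω) := measure_mono hQball
      _ ≤ (ENNReal.ofReal (max cdbl 1))^n * μ (ball c (σ/2) ∩ Ω) := hdbl c hcΩ _ hrpos n
      _ ≤ ENNReal.ofReal Kr * μ (cube d p σ) := by
          rw [hKrdef, ENNReal.ofReal_pow (zero_le_one.trans (le_max_right cdbl 1))]
          exact mul_le_mul' le_rfl
            (measure_mono (Set.inter_subset_left.trans (ball_subset_cube hσ)))
  -- the grid of subcubes
  set B : (Fin d → Fin (N+1)) → (Fin d → ℝ) := fun v i => a i + hstep * ((v i : ℕ) : ℝ)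
    with hBdef
  have hBsub : ∀ v, cube d (B v) s ⊆ cube d a l := by
    intro v
    apply cube_subset_cube
    · intro i
      have := mul_nonneg hstep0.le (Nat.cast_nonneg (v i : ℕ))
      simp only [hBdef]
      linarith
    · intro i
      have hvi : (((v i : ℕ)) : ℝ) ≤ (N : ℝ) := by
        exact_mod_cast Nat.lt_succ_iff.1 (v i).isLt
      have h1 : hstep * ((v i : ℕ) : ℝ) ≤ hstep * N := mul_le_mul_of_nonneg_left hvi hstep0.le
      simp only [hBdef]
      rw [hsdef]
      linarith [hNstep]
  -- covering
  have hcover : cube d a l ⊆ ⋃ v : Fin d → Fin (N+1), cube d (B v) s := by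
    intro x hx
    have key : ∀ t : ℝ, 0 ≤ t → t ≤ l →
        hstep * ((min N (⌊t/hstep⌋.toNat) : ℕ) : ℝ) ≤ t ∧
        t ≤ hstep * ((min N (⌊t/hstep⌋.toNat) : ℕ) : ℝ) + s := by
      intro t ht0 htl
      have hfl0 : 0 ≤ ⌊t/hstep⌋ := Int.floor_nonneg.2 (div_nonneg ht0 hstep0.le)
      have hmul : hstep * (t / hstep) = t := by field_simp
      rcases le_or_gt (⌊t/hstep⌋.toNat) N with hc | hc
      · have hmin : ((min N (⌊t/hstep⌋.toNat) : ℕ) : ℝ) = ((⌊t/hstep⌋ : ℤ) : ℝ) := by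
          rw [min_eq_right hc]
          exact_mod_cast Int.toNat_of_nonneg hfl0
        rw [hmin]
        constructor
        · have h1 : ((⌊t/hstep⌋ : ℤ) : ℝ) ≤ t / hstep := Int.floor_le _
          have h2 := mul_le_mul_of_nonneg_left h1 hstep0.le
          linarith [hmul]
        · have h1 : t / hstep < ((⌊t/hstep⌋ : ℤ) : ℝ) + 1 := Int.lt_floor_add_one _
          have h2 := mul_lt_mul_of_pos_left h1 hstep0
          rw [hmul] at h2
          nlinarith [hstep_le, hs0]
      · have hmin : ((min N (⌊t/hstep⌋.toNat) : ℕ) : ℝ) = (N : ℝ) := by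
          rw [min_eq_left hc.le]
        rw [hmin]
        constructor
        · have h1 : ((N : ℤ) : ℝ) < ((⌊t/hstep⌋ : ℤ) : ℝ) := by
            exact_mod_cast Int.lt_toNat.1 hc
          have h2 : ((⌊t/hstep⌋ : ℤ) : ℝ) ≤ t / hstep := Int.floor_le _
          have h3 : (N : ℝ) ≤ t / hstep := by push_cast at h1 ⊢; linarith
          have h4 := mul_le_mul_of_nonneg_left h3 hstep0.le
          linarith [hmul]
        · rw [hsdef]
          linarith [hNstep]
    set v : Fin d → Fin (N+1) := fun i =>
      ⟨min N (⌊(x i - a i)/hstep⌋.toNat), Nat.lt_succ_of_le (min_le_left _ _)⟩ with hvdef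
    refine Set.mem_iUnion.2 ⟨v, ?_⟩
    intro i
    have hval : ((v i : ℕ) : ℝ) = ((min N (⌊(x i - a i)/hstep⌋.toNat) : ℕ) : ℝ) := rfl
    have hk := key (x i - a i) (by linarith [(hx i).1]) (by linarith [(hx i).2])
    constructor
    · simp only [hBdef, hval]; linarith [hk.1]
    · simp only [hBdef, hval]; linarith [hk.2]
  -- basic measure facts
  obtain ⟨hQ0, hQfin⟩ := hposfin a l hl hQΩ
  have hvpf : ∀ v, μ (cube d (B v) s) ≠ 0 ∧ μ (cube d (B v) s) ≠ ∞ :=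
    fun v => hposfin (B v) s hs0 ((hBsub v).trans hQΩ)
  -- maximizing subcube
  obtain ⟨w₀, -, hw₀⟩ := Finset.exists_max_image Finset.univ
    (fun v : Fin d → Fin (N+1) => oscN μ (cube d (B v) s) f) ⟨default, Finset.mem_univ _⟩
  set M : ℝ := oscN μ (cube d (B w₀) s) f with hMdef
  have hMb : ∀ v, oscN μ (cube d (B v) s) f ≤ M := fun v => hw₀ v (Finset.mem_univ v)
  have hM0 : 0 ≤ M := oscN_nonneg μ (cube_measurableSet _ _) f
  -- adjacent subcubes have comparable averages
  have hadj : ∀ (u u' : Fin d → Fin (N+1)) (i : Fin d),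
      (∀ j, j ≠ i → u' j = u j) → ((u' i : ℕ) = (u i : ℕ) + 1) →
      |avg μ (cube d (B u) s) f - avg μ (cube d (B u') s) f| ≤ 2 * (Kr * M) := by
    intro u u' i hj hi
    have hPs : 0 < s - hstep := by linarith
    have hBu'i : B u' i = B u i + hstep := by
      simp only [hBdef, hi]
      push_cast
      ring
    have hPu' : cube d (B u') (s - hstep) ⊆ cube d (B u') s :=
      cube_subset_cube (fun j => le_refl _) (fun j => by linarith)
    have hPu : cube d (B u') (s - hstep) ⊆ cube d (B u) s := by
      apply cube_subset_cube
      · intro j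
        rcases eq_or_ne j i with rfl | hne
        · rw [hBu'i]; linarith
        · have e : B u' j = B u j := by simp only [hBdef, hj j hne]
          rw [e]
      · intro j
        rcases eq_or_ne j i with rfl | hne
        · rw [hBu'i]; linarith
        · have e : B u' j = B u j := by simp only [hBdef, hj j hne]
          rw [e]; linarith
    have hPpf := hposfin (B u') (s - hstep) hPs ((hPu'.trans (hBsub u')).trans hQΩ)
    have hratio : ∀ v : Fin d → Fin (N+1), cube d (B u') (s - hstep) ⊆ cube d (B v) s →
        |avg μ (cube d (B u') (s - hstep)) f - avg μ (cube d (B v) s) f| ≤ Kr * M := by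
      intro v hPv
      have hv := hvpf v
      have h1 := avg_diff_le μ hPv hPpf.1 hv.2 (hf.mono_set (hBsub v))
      have hPtpos : 0 < (μ (cube d (B u') (s - hstep))).toReal :=
        ENNReal.toReal_pos hPpf.1 hPpf.2
      have h2 : (μ (cube d (B v) s)).toReal / (μ (cube d (B u') (s - hstep))).toReal ≤ Kr := by
        have hcmp' : μ (cube d (B v) s) ≤ ENNReal.ofReal Kr * μ (cube d (B u') (s - hstep)) :=
          le_trans (measure_mono (hBsub v))
            (hcmp (B u') (s - hstep) hPs (by linarith) (hPu'.trans (hBsub u')))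
        have hfin' : ENNReal.ofReal Kr * μ (cube d (B u') (s - hstep)) ≠ ∞ :=
          ENNReal.mul_ne_top ENNReal.ofReal_ne_top hPpf.2
        have h3 := ENNReal.toReal_mono hfin' hcmp'
        rw [ENNReal.toReal_mul, ENNReal.toReal_ofReal hKr0] at h3
        rw [div_le_iff₀ hPtpos]
        exact h3
      calc |avg μ (cube d (B u') (s - hstep)) f - avg μ (cube d (B v) s) f|
          ≤ (μ (cube d (B v) s)).toReal / (μ (cube d (B u') (s - hstep))).toReal *
            oscN μ (cube d (B v) s) f := h1
        _ ≤ Kr * M := mul_le_mul h2 (hMb v)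
            (oscN_nonneg μ (cube_measurableSet _ _) f) hKr0
    have hr1 := hratio u hPu
    have hr2 := hratio u' hPu'
    calc |avg μ (cube d (B u) s) f - avg μ (cube d (B u') s) f|
        ≤ |avg μ (cube d (B u) s) f - avg μ (cube d (B u') (s - hstep)) f| +
          |avg μ (cube d (B u') (s - hstep)) f - avg μ (cube d (B u') s) f| :=
          abs_sub_le _ _ _
      _ ≤ 2 * (Kr * M) := by rw [abs_sub_comm] at hr1; linarith
  -- chaining through the grid
  have hchain : ∀ (k : ℕ) (v w : Fin d → Fin (N+1)),
      (∑ i : Fin d, (((v i : ℕ) : ℤ) - ((w i : ℕ) : ℤ)).natAbs) = k →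
      |avg μ (cube d (B v) s) f - avg μ (cube d (B w) s) f| ≤ 2 * (Kr * M) * k := by
    intro k
    induction k with
    | zero =>
      intro v w hD
      have hvw : v = w := by
        funext i
        have h1 : (((v i : ℕ) : ℤ) - ((w i : ℕ) : ℤ)).natAbs = 0 :=
          Finset.sum_eq_zero_iff.1 hD i (Finset.mem_univ i)
        have h2 : ((v i : ℕ) : ℤ) = ((w i : ℕ) : ℤ) := by omega
        exact Fin.ext (by exact_mod_cast h2)
      rw [hvw]
      simp
    | succ k ih =>
      intro v w hD
      have hex : ∃ i, (v i : ℕ) ≠ (w i : ℕ) := by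
        by_contra hall
        push_neg at hall
        have h0 : (∑ i : Fin d, (((v i : ℕ) : ℤ) - ((w i : ℕ) : ℤ)).natAbs) = 0 :=
          Finset.sum_eq_zero fun i _ => by rw [hall i]; simp
        omega
      obtain ⟨i, hi⟩ := hex
      rcases Nat.lt_or_ge (w i : ℕ) (v i : ℕ) with hlt | hge
      · set w' : Fin d → Fin (N+1) := Function.update w i
          ⟨(w i : ℕ) + 1, by have := (v i).isLt; omega⟩ with hw'def
        have hw'j : ∀ j, j ≠ i → w' j = w j := fun j hj => Function.update_of_ne hj _ _
        have hw'i : (w' i : ℕ) = (w i : ℕ) + 1 := by simp [hw'def]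
        have hDd : (∑ j : Fin d, (((v j : ℕ) : ℤ) - ((w' j : ℕ) : ℤ)).natAbs) = k := by
          have heq : ∀ j ∈ Finset.univ.erase i,
              (((v j : ℕ) : ℤ) - ((w' j : ℕ) : ℤ)).natAbs
                = (((v j : ℕ) : ℤ) - ((w j : ℕ) : ℤ)).natAbs := by
            intro j hj
            rw [hw'j j (Finset.ne_of_mem_erase hj)]
          have e1 := Finset.add_sum_erase Finset.univ
            (fun j => (((v j : ℕ) : ℤ) - ((w' j : ℕ) : ℤ)).natAbs) (Finset.mem_univ i)
          have e2 := Finset.add_sum_erase Finset.univ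
            (fun j => (((v j : ℕ) : ℤ) - ((w j : ℕ) : ℤ)).natAbs) (Finset.mem_univ i)
          rw [Finset.sum_congr rfl heq] at e1
          have e3 : (((v i : ℕ) : ℤ) - ((w' i : ℕ) : ℤ)).natAbs + 1
              = (((v i : ℕ) : ℤ) - ((w i : ℕ) : ℤ)).natAbs := by
            rw [hw'i]; omega
          omega
        have hstep1 := hadj w w' i hw'j hw'i
        have hrec := ih v w' hDd
        rw [abs_sub_comm] at hstep1
        calc |avg μ (cube d (B v) s) f - avg μ (cube d (B w) s) f|
            ≤ |avg μ (cube d (B v) s) f - avg μ (cube d (B w') s) f| +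
              |avg μ (cube d (B w') s) f - avg μ (cube d (B w) s) f| := abs_sub_le _ _ _
          _ ≤ 2 * (Kr * M) * k + 2 * (Kr * M) := add_le_add hrec hstep1
          _ = 2 * (Kr * M) * ((k : ℕ) + 1 : ℕ) := by push_cast; ring
      · have hlt' : (v i : ℕ) < (w i : ℕ) := lt_of_le_of_ne hge hi
        set w' : Fin d → Fin (N+1) := Function.update w i
          ⟨(w i : ℕ) - 1, by have := (w i).isLt; omega⟩ with hw'def
        have hw'j : ∀ j, j ≠ i → w' j = w j := fun j hj => Function.update_of_ne hj _ _
        have hw'i : (w i : ℕ) = (w' i : ℕ) + 1 := by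
          have hv : (w' i : ℕ) = (w i : ℕ) - 1 := by simp [hw'def]
          omega
        have hDd : (∑ j : Fin d, (((v j : ℕ) : ℤ) - ((w' j : ℕ) : ℤ)).natAbs) = k := by
          have heq : ∀ j ∈ Finset.univ.erase i,
              (((v j : ℕ) : ℤ) - ((w' j : ℕ) : ℤ)).natAbs
                = (((v j : ℕ) : ℤ) - ((w j : ℕ) : ℤ)).natAbs := by
            intro j hj
            rw [hw'j j (Finset.ne_of_mem_erase hj)]
          have e1 := Finset.add_sum_erase Finset.univ
            (fun j => (((v j : ℕ) : ℤ) - ((w' j : ℕ) : ℤ)).natAbs) (Finset.mem_univ i)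
          have e2 := Finset.add_sum_erase Finset.univ
            (fun j => (((v j : ℕ) : ℤ) - ((w j : ℕ) : ℤ)).natAbs) (Finset.mem_univ i)
          rw [Finset.sum_congr rfl heq] at e1
          have e3 : (((v i : ℕ) : ℤ) - ((w' i : ℕ) : ℤ)).natAbs + 1
              = (((v i : ℕ) : ℤ) - ((w i : ℕ) : ℤ)).natAbs := by
            omega
          omega
        have hstep1 := hadj w' w i (fun j hj => (hw'j j hj).symm) hw'i
        have hrec := ih v w' hDd
        calc |avg μ (cube d (B v) s) f - avg μ (cube d (B w) s) f|
            ≤ |avg μ (cube d (B v) s) f - avg μ (cube d (B w') s) f| +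
              |avg μ (cube d (B w') s) f - avg μ (cube d (B w) s) f| := abs_sub_le _ _ _
          _ ≤ 2 * (Kr * M) * k + 2 * (Kr * M) := add_le_add hrec hstep1
          _ = 2 * (Kr * M) * ((k : ℕ) + 1 : ℕ) := by push_cast; ring
  -- assemble
  refine ⟨B w₀, hBsub w₀, ?_⟩
  show oscN μ (cube d a l) f ≤ C * M
  set c₀ : ℝ := avg μ (cube d (B w₀) s) f with hc₀def
  have hQconst : IntegrableOn (fun _ => c₀) (cube d a l) μ :=
    integrableOn_const hQfin
  have habs : IntegrableOn (fun x => |f x - c₀|) (cube d a l) μ := (hf.sub hQconst).abs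
  have havgb : ∀ v, |avg μ (cube d (B v) s) f - c₀| ≤ 2 * (Kr * M) * ((d : ℝ) * N) := by
    intro v
    have hDle : (∑ i : Fin d, (((v i : ℕ) : ℤ) - ((w₀ i : ℕ) : ℤ)).natAbs) ≤ d * N := by
      calc (∑ i : Fin d, (((v i : ℕ) : ℤ) - ((w₀ i : ℕ) : ℤ)).natAbs)
          ≤ ∑ _i : Fin d, N := Finset.sum_le_sum fun i _ => by
            have h1 := (v i).isLt; have h2 := (w₀ i).isLt; omega
        _ = d * N := by simp [Finset.sum_const, Finset.card_fin, smul_eq_mul]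
    have h1 := hchain (∑ i : Fin d, (((v i : ℕ) : ℤ) - ((w₀ i : ℕ) : ℤ)).natAbs) v w₀ rfl
    refine le_trans h1 ?_
    have h2 : (0:ℝ) ≤ 2 * (Kr * M) := by
      have := mul_nonneg hKr0 hM0; linarith
    have h3 : ((∑ i : Fin d, (((v i : ℕ) : ℤ) - ((w₀ i : ℕ) : ℤ)).natAbs : ℕ) : ℝ)
        ≤ (d : ℝ) * N := by exact_mod_cast hDle
    exact mul_le_mul_of_nonneg_left h3 h2
  have hIv : ∀ v, ∫ x in cube d (B v) s, |f x - c₀| ∂μ ≤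
      (μ (cube d (B v) s)).toReal * ((1 + 2 * Kr * ((d : ℝ) * N)) * M) := by
    intro v
    have hv := hvpf v
    have hfv : IntegrableOn f (cube d (B v) s) μ := hf.mono_set (hBsub v)
    have hvlt : μ (cube d (B v) s) < ∞ := lt_top_iff_ne_top.2 hv.2
    have hconstc : IntegrableOn (fun _ => c₀) (cube d (B v) s) μ :=
      integrableOn_const hvlt.ne
    set av : ℝ := avg μ (cube d (B v) s) f with havdef
    have hconstav : IntegrableOn (fun _ => av) (cube d (B v) s) μ :=
      integrableOn_const hvlt.ne
    have hAv : IntegrableOn (fun x => |f x - av|) (cube d (B v) s) μ :=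
      (hfv.sub hconstav).abs
    have hconsta : IntegrableOn (fun _ => |av - c₀|) (cube d (B v) s) μ :=
      integrableOn_const hvlt.ne
    have h1 : ∫ x in cube d (B v) s, |f x - c₀| ∂μ ≤
        ∫ x in cube d (B v) s, (|f x - av| + |av - c₀|) ∂μ := by
      apply integral_mono ((hfv.sub hconstc).abs) (((hfv.sub hconstav).abs).add hconsta)
      intro x
      exact abs_sub_le (f x) av c₀
    have h2 : ∫ x in cube d (B v) s, (|f x - av| + |av - c₀|) ∂μ
        = (∫ x in cube d (B v) s, |f x - av| ∂μ) +
          (μ (cube d (B v) s)).toReal * |av - c₀| := by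
      rw [integral_add hAv hconsta, setIntegral_const, smul_eq_mul, measureReal_def]
    have h3 : ∫ x in cube d (B v) s, |f x - av| ∂μ
        = (μ (cube d (B v) s)).toReal * oscN μ (cube d (B v) s) f :=
      integral_abs_sub_avg μ hv.1 hv.2 f
    have htv : (0:ℝ) ≤ (μ (cube d (B v) s)).toReal := ENNReal.toReal_nonneg
    have h4 := mul_le_mul_of_nonneg_left (hMb v) htv
    have h5 := mul_le_mul_of_nonneg_left (havgb v) htv
    rw [h2, h3] at h1
    calc ∫ x in cube d (B v) s, |f x - c₀| ∂μ
        ≤ (μ (cube d (B v) s)).toReal * oscN μ (cube d (B v) s) f +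
          (μ (cube d (B v) s)).toReal * |av - c₀| := h1
      _ ≤ (μ (cube d (B v) s)).toReal * M +
          (μ (cube d (B v) s)).toReal * (2 * (Kr * M) * ((d : ℝ) * N)) := add_le_add h4 h5
      _ = (μ (cube d (B v) s)).toReal * ((1 + 2 * Kr * ((d : ℝ) * N)) * M) := by ring
  have hsum : ∫ x in cube d a l, |f x - c₀| ∂μ ≤
      ∑ v : Fin d → Fin (N+1), ∫ x in cube d (B v) s, |f x - c₀| ∂μ := by
    have hrhs0 : (0:ℝ) ≤ ∑ v : Fin d → Fin (N+1), ∫ x in cube d (B v) s, |f x - c₀| ∂μ :=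
      Finset.sum_nonneg fun v _ =>
        setIntegral_nonneg (cube_measurableSet _ _) fun x _ => abs_nonneg _
    rw [← ENNReal.ofReal_le_ofReal_iff hrhs0]
    calc ENNReal.ofReal (∫ x in cube d a l, |f x - c₀| ∂μ)
        = ∫⁻ x in cube d a l, ENNReal.ofReal |f x - c₀| ∂μ :=
          ofReal_integral_eq_lintegral_ofReal habs
            (Filter.Eventually.of_forall fun x => abs_nonneg _)
      _ ≤ ∫⁻ x in ⋃ v : Fin d → Fin (N+1), cube d (B v) s,
            ENNReal.ofReal |f x - c₀| ∂μ := lintegral_mono_set hcover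
      _ ≤ ∑' v : Fin d → Fin (N+1), ∫⁻ x in cube d (B v) s,
            ENNReal.ofReal |f x - c₀| ∂μ := lintegral_iUnion_le _ _
      _ = ∑ v : Fin d → Fin (N+1), ∫⁻ x in cube d (B v) s,
            ENNReal.ofReal |f x - c₀| ∂μ := tsum_fintype _
      _ = ∑ v : Fin d → Fin (N+1),
            ENNReal.ofReal (∫ x in cube d (B v) s, |f x - c₀| ∂μ) :=
          Finset.sum_congr rfl fun v _ =>
            (ofReal_integral_eq_lintegral_ofReal (habs.mono_set (hBsub v))
              (Filter.Eventually.of_forall fun x => abs_nonneg _)).symm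
      _ = ENNReal.ofReal (∑ v : Fin d → Fin (N+1),
            ∫ x in cube d (B v) s, |f x - c₀| ∂μ) :=
          (ENNReal.ofReal_sum_of_nonneg fun v _ =>
            setIntegral_nonneg (cube_measurableSet _ _) fun x _ => abs_nonneg _).symm
  have hcard : ((Fintype.card (Fin d → Fin (N+1)) : ℕ) : ℝ) = ((N:ℝ)+1)^d := by
    rw [Fintype.card_fun, Fintype.card_fin, Fintype.card_fin]
    push_cast
    ring
  have hXnn : (0:ℝ) ≤ (1 + 2 * Kr * ((d : ℝ) * N)) * M := by
    have h1 : (0:ℝ) ≤ 2 * Kr * ((d : ℝ) * N) := by positivity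
    nlinarith
  have hsum2 : ∑ v : Fin d → Fin (N+1), ∫ x in cube d (B v) s, |f x - c₀| ∂μ ≤
      ((N:ℝ)+1)^d * ((μ (cube d a l)).toReal * ((1 + 2 * Kr * ((d : ℝ) * N)) * M)) := by
    calc ∑ v : Fin d → Fin (N+1), ∫ x in cube d (B v) s, |f x - c₀| ∂μ
        ≤ ∑ _v : Fin d → Fin (N+1),
            (μ (cube d a l)).toReal * ((1 + 2 * Kr * ((d : ℝ) * N)) * M) := by
          apply Finset.sum_le_sum
          intro v _
          refine le_trans (hIv v) ?_
          exact mul_le_mul_of_nonneg_right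
            (ENNReal.toReal_mono hQfin (measure_mono (hBsub v))) hXnn
      _ = ((N:ℝ)+1)^d * ((μ (cube d a l)).toReal * ((1 + 2 * Kr * ((d : ℝ) * N)) * M)) := by
          rw [Finset.sum_const, Finset.card_univ, nsmul_eq_mul, hcard]
  have htQ : (0:ℝ) < (μ (cube d a l)).toReal := ENNReal.toReal_pos hQ0 hQfin
  have hosc := oscN_le_two_mul μ (cube_measurableSet a l) hQ0 hQfin hf c₀
  have hfinal : ((μ (cube d a l)).toReal)⁻¹ * ∫ x in cube d a l, |f x - c₀| ∂μ ≤
      ((N:ℝ)+1)^d * ((1 + 2 * Kr * ((d : ℝ) * N)) * M) := by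
    have h1 := hsum.trans hsum2
    have h2 := mul_le_mul_of_nonneg_left h1 (inv_nonneg.2 htQ.le)
    calc ((μ (cube d a l)).toReal)⁻¹ * ∫ x in cube d a l, |f x - c₀| ∂μ
        ≤ ((μ (cube d a l)).toReal)⁻¹ *
          (((N:ℝ)+1)^d * ((μ (cube d a l)).toReal *
            ((1 + 2 * Kr * ((d : ℝ) * N)) * M))) := h2
      _ = ((N:ℝ)+1)^d * ((1 + 2 * Kr * ((d : ℝ) * N)) * M) := by
          field_simp
  calc oscN μ (cube d a l) f
      ≤ 2 * (((μ (cube d a l)).toReal)⁻¹ * ∫ x in cube d a l, |f x - c₀| ∂μ) := hosc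
    _ ≤ 2 * (((N:ℝ)+1)^d * ((1 + 2 * Kr * ((d : ℝ) * N)) * M)) := by linarith
    _ = C * M := by rw [hCdef]; ring
end
end

section
/- Let 1 ≤ p < ∞ and −1 < α < p − 1. For every f ∈ B^{1−(α+1)/p}_{p,p}(ℝ^d), the Whitney extension Ef satisfies ‖Ef‖_{L^p(ℝ^{d+1}_+, μ_α)} ≲ ‖f‖_{L^p(ℝ^d)}; more precisely, ∫_{ℝ^{d+1}_+} |Ef|^p dμ_α ≤ C Σ_{k≥0} 2^{-k(α+1)} ‖f‖_{L^p(ℝ^d)}^p ≤ C' ‖f‖_{L^p(ℝ^d)}^p. -/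
open MeasureTheory ENNReal Set Metric Filter
open scoped NNReal Classical

noncomputable section

namespace Stmt5Aux


lemma dyadicCube_eq_pi (d : ℕ) (k : ℤ) (m : Fin d → ℤ) :
    dyadicCube d k m =
      Set.pi Set.univ (fun i => Set.Ioc ((2:ℝ)^(-k) * (m i)) ((2:ℝ)^(-k) * ((m i) + 1))) := by
  ext x
  simp [dyadicCube, Set.mem_pi, Set.mem_Ioc]

lemma measurableSet_dyadicCube (d : ℕ) (k : ℤ) (m : Fin d → ℤ) :
    MeasurableSet (dyadicCube d k m) := by
  rw [dyadicCube_eq_pi]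
  exact MeasurableSet.univ_pi fun i => measurableSet_Ioc

lemma volume_dyadicCube (d : ℕ) (k : ℤ) (m : Fin d → ℤ) :
    volume (dyadicCube d k m) = ENNReal.ofReal (((2:ℝ)^(-k))^d) := by
  rw [dyadicCube_eq_pi, volume_pi_pi]
  have h : ∀ i : Fin d, volume (Set.Ioc ((2:ℝ)^(-k) * (m i)) ((2:ℝ)^(-k) * ((m i) + 1)))
      = ENNReal.ofReal ((2:ℝ)^(-k)) := by
    intro i
    rw [Real.volume_Ioc]
    congr 1
    ring
  simp_rw [h]
  rw [Finset.prod_const, Finset.card_univ, Fintype.card_fin,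
    ← ENNReal.ofReal_pow (by positivity)]

lemma dyadicCube_disjoint (d : ℕ) (k : ℤ) {m m' : Fin d → ℤ} (h : m ≠ m') :
    Disjoint (dyadicCube d k m) (dyadicCube d k m') := by
  rw [Set.disjoint_left]
  intro x hx hx'
  obtain ⟨i, hi⟩ := Function.ne_iff.mp h
  have h2 : (0:ℝ) < (2:ℝ)^(-k) := zpow_pos two_pos _
  have key : ∀ a b : Fin d → ℤ, a i < b i → x ∈ dyadicCube d k a → x ∈ dyadicCube d k b → False := by
    intro a b hab ha hb
    have h1 := (ha i).2
    have h3 := (hb i).1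
    have hcast : ((a i : ℝ) + 1) ≤ (b i : ℝ) := by exact_mod_cast hab
    nlinarith [mul_le_mul_of_nonneg_left hcast h2.le]
  rcases lt_or_gt_of_ne hi with hlt | hlt
  · exact key _ _ hlt hx hx'
  · exact key _ _ hlt hx' hx

lemma integrableOn_dyadicCube {d : ℕ} {f : Rd d → ℝ} (hf : LocallyIntegrable f volume)
    (k : ℤ) (m : Fin d → ℤ) : IntegrableOn f (dyadicCube d k m) volume := by
  have hsub : dyadicCube d k m ⊆
      Set.pi Set.univ (fun i => Set.Icc ((2:ℝ)^(-k) * (m i)) ((2:ℝ)^(-k) * ((m i) + 1))) := by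
    intro x hx i _
    exact ⟨(hx i).1.le, (hx i).2⟩
  exact (hf.integrableOn_isCompact (isCompact_univ_pi fun i => isCompact_Icc)).mono_set hsub



lemma avg_pow_le {d : ℕ} {f : Rd d → ℝ} (hf : LocallyIntegrable f volume)
    {p : ℝ} (hp : 1 ≤ p) (k : ℤ) (m : Fin d → ℤ) :
    ENNReal.ofReal (|avg volume (dyadicCube d k m) f| ^ p) * volume (dyadicCube d k m)
      ≤ ∫⁻ x in dyadicCube d k m, (‖f x‖₊ : ℝ≥0∞) ^ p ∂volume := by
  have hp0 : (0:ℝ) < p := lt_of_lt_of_le one_pos hp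
  set Q := dyadicCube d k m with hQ
  have hint : IntegrableOn f Q volume := integrableOn_dyadicCube hf k m
  have hμQ : volume Q = ENNReal.ofReal (((2:ℝ)^(-k))^d) := volume_dyadicCube d k m
  have hQpos : 0 < volume Q := by rw [hμQ]; exact ENNReal.ofReal_pos.mpr (by positivity)
  have hQfin : volume Q ≠ ∞ := by rw [hμQ]; exact ENNReal.ofReal_ne_top
  set A := ∫⁻ x in Q, (‖f x‖₊ : ℝ≥0∞) ∂volume with hA
  set I := ∫⁻ x in Q, (‖f x‖₊ : ℝ≥0∞) ^ p ∂volume with hI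
  -- Step 1 : ofReal |avg| ≤ (volume Q)⁻¹ * A
  have htR : (0:ℝ) < (volume Q).toReal := ENNReal.toReal_pos hQpos.ne' hQfin
  have h1 : |avg volume Q f| ≤ ((volume Q).toReal)⁻¹ * ∫ x in Q, ‖f x‖ ∂volume := by
    rw [avg, setAverage_eq, measureReal_def, smul_eq_mul, abs_mul, abs_inv, abs_of_pos htR]
    exact mul_le_mul_of_nonneg_left (norm_integral_le_integral_norm f)
      (inv_nonneg.mpr htR.le)
  have h2 : ENNReal.ofReal |avg volume Q f| ≤ (volume Q)⁻¹ * A := by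
    refine le_trans (ENNReal.ofReal_le_ofReal h1) ?_
    rw [ENNReal.ofReal_mul (inv_nonneg.mpr htR.le), ENNReal.ofReal_inv_of_pos htR,
      ENNReal.ofReal_toReal hQfin, ofReal_integral_norm_eq_lintegral_enorm hint]
    exact le_rfl
  -- Step 2 : Hölder, A ≤ I^(1/p) * (volume Q)^(1 - 1/p)
  have hpne : ENNReal.ofReal p ≠ 0 := by
    simp [ENNReal.ofReal_eq_zero]; linarith
  have h3 : A ≤ I ^ (1/p) * (volume Q) ^ (1 - 1/p) := by
    have hle : (1 : ℝ≥0∞) ≤ ENNReal.ofReal p := by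
      rw [← ENNReal.ofReal_one]; exact ENNReal.ofReal_le_ofReal hp
    have := eLpNorm_le_eLpNorm_mul_rpow_measure_univ (μ := volume.restrict Q) hle
      hint.aestronglyMeasurable
    rw [eLpNorm_one_eq_lintegral_enorm, eLpNorm_eq_lintegral_rpow_enorm_toReal hpne
      ENNReal.ofReal_ne_top, ENNReal.toReal_ofReal hp0.le, Measure.restrict_apply_univ] at this
    simp at this ⊢
    exact this
  -- Step 3 : combine
  calc ENNReal.ofReal (|avg volume Q f| ^ p) * volume Q
      = (ENNReal.ofReal |avg volume Q f|) ^ p * volume Q := by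
        rw [ENNReal.ofReal_rpow_of_nonneg (abs_nonneg _) hp0.le]
    _ ≤ ((volume Q)⁻¹ * (I ^ (1/p) * (volume Q) ^ (1 - 1/p))) ^ p * volume Q := by
        gcongr
        exact le_trans h2 (by gcongr)
    _ = I := by
        have h0 : volume Q ≠ 0 := hQpos.ne'
        have e1 : (I ^ (1/p)) ^ p = I := by
          rw [← ENNReal.rpow_mul, one_div_mul_cancel hp0.ne', ENNReal.rpow_one]
        have e2 : ((volume Q) ^ ((1:ℝ) - 1/p)) ^ p = (volume Q) ^ (p - 1) := by
          rw [← ENNReal.rpow_mul]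
          congr 1
          field_simp
        have e3 : ((volume Q) ^ p)⁻¹ = (volume Q) ^ (-p) := by
          rw [ENNReal.rpow_neg]
        rw [ENNReal.mul_rpow_of_nonneg _ _ hp0.le, ENNReal.mul_rpow_of_nonneg _ _ hp0.le,
          ENNReal.inv_rpow, e1, e2, e3]
        have e4 : (volume Q) ^ (-p) * (I * (volume Q) ^ (p - 1)) * volume Q
            = I * ((volume Q) ^ (-p) * (volume Q) ^ (p - 1) * (volume Q) ^ (1:ℝ)) := by
          rw [ENNReal.rpow_one]; ring
        rw [e4, ← ENNReal.rpow_add _ _ h0 hQfin, ← ENNReal.rpow_add _ _ h0 hQfin,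
          show -p + (p - 1) + 1 = 0 by ring, ENNReal.rpow_zero, mul_one]



lemma whitneyCube_nonempty (d : ℕ) (k : ℕ) (m : Fin d → ℤ) : (whitneyCube d k m).Nonempty := by
  refine ⟨fun i => (2:ℝ)^(-(k:ℤ)) * (((Fin.snoc m 1 : Fin (d+1) → ℤ) i : ℝ) + 1), fun i => ?_⟩
  have h2 : (0:ℝ) < (2:ℝ)^(-(k:ℤ)) := zpow_pos two_pos _
  constructor
  · exact mul_lt_mul_of_pos_left (by linarith) h2
  · exact le_refl _

lemma isOpen_nnbhd (d : ℕ) (k : ℕ) (m : Fin d → ℤ) : IsOpen (nnbhd d k m) :=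
  isOpen_lt (continuous_infDist_pt _) continuous_const

lemma mem_nnbhd_bounds {d : ℕ} {k : ℕ} {m : Fin d → ℤ} {x : Rd (d+1)} (hx : x ∈ nnbhd d k m) :
    ∀ i, (2:ℝ)^(-(k:ℤ)) * (((Fin.snoc m 1 : Fin (d+1) → ℤ) i : ℝ) - 1/4) < x i ∧
         x i < (2:ℝ)^(-(k:ℤ)) * (((Fin.snoc m 1 : Fin (d+1) → ℤ) i : ℝ) + 5/4) := by
  have h2 : (0:ℝ) < (2:ℝ)^(-(k:ℤ)) := zpow_pos two_pos _
  have hr : (0:ℝ) < (2:ℝ)^(-(k:ℤ)) / 4 := by positivity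
  obtain ⟨z, hz, hdz⟩ := (Metric.infDist_lt_iff (whitneyCube_nonempty d k m)).mp hx
  rw [dist_pi_lt_iff hr] at hdz
  intro i
  have h1 := (hz i).1
  have h3 := (hz i).2
  have h4 := hdz i
  rw [Real.dist_eq, abs_lt] at h4
  constructor <;> nlinarith

/-- Uniform box containing `nnbhd`. -/
lemma nnbhd_subset (d : ℕ) (k : ℕ) (m : Fin d → ℤ) :
    nnbhd d k m ⊆ Set.pi Set.univ (fun i =>
      Set.Ioo ((2:ℝ)^(-(k:ℤ)) * (((Fin.snoc m 1 : Fin (d+1) → ℤ) i : ℝ) - 1/4))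
        ((2:ℝ)^(-(k:ℤ)) * (((Fin.snoc m 1 : Fin (d+1) → ℤ) i : ℝ) + 5/4))) := by
  intro x hx i _
  exact mem_nnbhd_bounds hx i

lemma density_bound {α : ℝ} (k : ℕ) {t : ℝ}
    (h1 : (2:ℝ)^(-(k:ℤ)) * (3/4) < t) (h2 : t < (2:ℝ)^(-(k:ℤ)) * (9/4)) :
    (min 1 |t|) ^ α ≤ max ((3/4:ℝ)^α) ((9/4:ℝ)^α) * ((2:ℝ)^(-(k:ℤ)))^α := by
  set ρ := (2:ℝ)^(-(k:ℤ)) with hρdef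
  have hρ : 0 < ρ := zpow_pos two_pos _
  have hρ1 : ρ ≤ 1 := by
    rw [hρdef]
    apply zpow_le_one_of_nonpos₀ one_le_two (by simp)
  have ht : 0 < t := lt_trans (by positivity) h1
  rw [abs_of_pos ht]
  rcases le_or_gt 0 α with hα | hα
  · calc (min 1 t)^α ≤ (ρ * (9/4))^α := by
          apply Real.rpow_le_rpow (le_min zero_le_one ht.le) (le_trans (min_le_right _ _) h2.le) hα
    _ = (9/4)^α * ρ^α := by rw [mul_comm, Real.mul_rpow (by norm_num) hρ.le]
    _ ≤ _ := mul_le_mul_of_nonneg_right (le_max_right _ _) (Real.rpow_nonneg hρ.le α)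
  · have hmin : ρ * (3/4) ≤ min 1 t := le_min (by nlinarith) h1.le
    calc (min 1 t)^α ≤ (ρ * (3/4))^α :=
          Real.rpow_le_rpow_of_nonpos (by positivity) hmin hα.le
    _ = (3/4)^α * ρ^α := by rw [mul_comm, Real.mul_rpow (by norm_num) hρ.le]
    _ ≤ _ := mul_le_mul_of_nonneg_right (le_max_left _ _) (Real.rpow_nonneg hρ.le α)

lemma muAlpha_nnbhd_le (d : ℕ) (α : ℝ) (k : ℕ) (m : Fin d → ℤ) :
    muAlpha d α (nnbhd d k m) ≤
      ENNReal.ofReal ((max ((3/4:ℝ)^α) ((9/4:ℝ)^α) * (3/2:ℝ)^(d+1)) *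
          (((2:ℝ)^(-(k:ℤ)))^α * (2:ℝ)^(-(k:ℤ)))) *
        ENNReal.ofReal (((2:ℝ)^(-(k:ℤ)))^d) := by
  set ρ := (2:ℝ)^(-(k:ℤ)) with hρdef
  have hρ : 0 < ρ := zpow_pos two_pos _
  set c : Fin (d+1) → ℤ := Fin.snoc m 1 with hc
  set B := Set.pi Set.univ (fun i : Fin (d+1) =>
      Set.Ioo (ρ * ((c i : ℝ) - 1/4)) (ρ * ((c i : ℝ) + 5/4))) with hB
  have hBm : MeasurableSet B := MeasurableSet.univ_pi fun i => measurableSet_Ioo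
  have hsub := nnbhd_subset d k m
  have hmono : muAlpha d α (nnbhd d k m) ≤ muAlpha d α B := measure_mono hsub
  refine le_trans hmono ?_
  rw [muAlpha, withDensity_apply _ hBm, Measure.restrict_restrict hBm]
  have step1 : ∫⁻ x in B ∩ upperHalf d, ENNReal.ofReal ((min 1 |x (Fin.last d)|) ^ α) ∂volume
      ≤ ∫⁻ x in B, ENNReal.ofReal ((min 1 |x (Fin.last d)|) ^ α) ∂volume :=
    lintegral_mono_set Set.inter_subset_left
  refine le_trans step1 ?_
  have step2 : ∫⁻ x in B, ENNReal.ofReal ((min 1 |x (Fin.last d)|) ^ α) ∂volume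
      ≤ ∫⁻ _ in B, ENNReal.ofReal (max ((3/4:ℝ)^α) ((9/4:ℝ)^α) * ρ^α) ∂volume := by
    apply setLIntegral_mono measurable_const
    intro x hx
    apply ENNReal.ofReal_le_ofReal
    have hlast := hx (Fin.last d) (Set.mem_univ _)
    have hcl : c (Fin.last d) = 1 := Fin.snoc_last _ _
    simp only [Set.mem_Ioo] at hlast
    rw [hcl] at hlast
    push_cast at hlast
    exact density_bound k (by linarith [hlast.1]) (by linarith [hlast.2])
  refine le_trans step2 ?_
  rw [setLIntegral_const]
  have hvol : volume B = ENNReal.ofReal (((3/2:ℝ) * ρ)^(d+1)) := by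
    rw [hB, volume_pi_pi]
    have h : ∀ i : Fin (d+1), volume (Set.Ioo (ρ * ((c i : ℝ) - 1/4)) (ρ * ((c i : ℝ) + 5/4)))
        = ENNReal.ofReal ((3/2:ℝ) * ρ) := by
      intro i
      rw [Real.volume_Ioo]
      congr 1
      ring
    simp_rw [h]
    rw [Finset.prod_const, Finset.card_univ, Fintype.card_fin,
      ← ENNReal.ofReal_pow (by positivity)]
  rw [hvol, ← ENNReal.ofReal_mul (by positivity)]
  apply le_of_eq
  rw [← ENNReal.ofReal_mul (by positivity)]
  congr 1
  ring



lemma scale_comparison {d : ℕ} {k k' : ℕ} {m m' : Fin d → ℤ} {x : Rd (d+1)}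
    (h : x ∈ nnbhd d k m) (h' : x ∈ nnbhd d k' m') : k' ≤ k + 1 := by
  by_contra hcon
  push_neg at hcon
  have h1 := (mem_nnbhd_bounds h (Fin.last d)).1
  have h2 := (mem_nnbhd_bounds h' (Fin.last d)).2
  rw [Fin.snoc_last] at h1 h2
  have hk2 : (k:ℤ) + 2 ≤ (k':ℤ) := by exact_mod_cast hcon
  have hmono : (2:ℝ)^(-(k':ℤ)) ≤ (2:ℝ)^(-((k:ℤ)+2)) :=
    zpow_le_zpow_right₀ one_le_two (by omega)
  have hsplit : (2:ℝ)^(-((k:ℤ)+2)) = (2:ℝ)^(-(k:ℤ)) * (4:ℝ)⁻¹ := by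
    rw [show -((k:ℤ)+2) = -(k:ℤ) + (-2) by ring, zpow_add₀ (two_ne_zero)]
    norm_num
  have hρ : (0:ℝ) < (2:ℝ)^(-(k:ℤ)) := zpow_pos two_pos _
  nlinarith

lemma index_localization {d : ℕ} {k : ℕ} {m : Fin d → ℤ} {x : Rd (d+1)}
    (h : x ∈ nnbhd d k m) (i : Fin d) :
    m i = ⌊x (Fin.castSucc i) * (2:ℝ)^(k:ℕ) + 1/4⌋ ∨
    m i = ⌊x (Fin.castSucc i) * (2:ℝ)^(k:ℕ) + 1/4⌋ - 1 := by
  have h1 := (mem_nnbhd_bounds h (Fin.castSucc i)).1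
  have h2 := (mem_nnbhd_bounds h (Fin.castSucc i)).2
  rw [Fin.snoc_castSucc] at h1 h2
  set ρ := (2:ℝ)^(-(k:ℤ)) with hρdef
  set y := x (Fin.castSucc i) * (2:ℝ)^(k:ℕ) with hy
  have hpow : (0:ℝ) < (2:ℝ)^(k:ℕ) := by positivity
  have hρ2 : ρ * (2:ℝ)^(k:ℕ) = 1 := by
    rw [hρdef, ← zpow_natCast (2:ℝ) k, ← zpow_add₀ (two_ne_zero)]
    norm_num
  have e : ∀ a : ℝ, ρ * a * (2:ℝ)^(k:ℕ) = a := by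
    intro a
    calc ρ * a * (2:ℝ)^(k:ℕ) = a * (ρ * (2:ℝ)^(k:ℕ)) := by ring
      _ = a := by rw [hρ2, mul_one]
  have hy1 : ((m i : ℝ)) - 1/4 < y := by
    have := mul_lt_mul_of_pos_right h1 hpow
    rwa [e] at this
  have hy2 : y < ((m i : ℝ)) + 5/4 := by
    have := mul_lt_mul_of_pos_right h2 hpow
    rwa [e] at this
  set b := ⌊y + 1/4⌋ with hb
  have hmb : m i ≤ b := Int.le_floor.mpr (by linarith)
  have hbm : b - 1 ≤ m i := by
    have hfl : (b:ℝ) ≤ y + 1/4 := Int.floor_le _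
    have : (b:ℝ) - 2 < (m i : ℝ) := by linarith
    have h' : b - 2 < m i := by exact_mod_cast this
    omega
  omega

lemma pointwise_bound (d : ℕ) {L : ℝ≥0} (P : WhitneyPOU d L) (f : Rd d → ℝ) {p : ℝ}
    (hp : 1 ≤ p) (x : Rd (d+1)) :
    ENNReal.ofReal (|whitneyExt d P f x| ^ p) ≤
      ENNReal.ofReal (((2:ℝ) * 4^d) ^ p) *
        ∑' t : ℕ × (Fin d → ℤ),
          ENNReal.ofReal (|avg volume (dyadicCube d t.1 t.2) f| ^ p) *
            (nnbhd d t.1 t.2).indicator 1 x := by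
  have hp0 : (0:ℝ) < p := lt_of_lt_of_le one_pos hp
  set a : ℕ × (Fin d → ℤ) → ℝ := fun t => |avg volume (dyadicCube d t.1 t.2) f| with ha
  by_cases hS : ∃ t : ℕ × (Fin d → ℤ), x ∈ nnbhd d t.1 t.2
  case neg =>
    have hz : ∀ t : ℕ × (Fin d → ℤ),
        avg volume (dyadicCube d t.1 t.2) f * P.psi t.1 t.2 x = 0 := by
      intro t
      have : P.psi t.1 t.2 x = 0 := by
        by_contra h
        exact hS ⟨t, P.support_subset t.1 t.2 x h⟩
      rw [this, mul_zero]
    have hE0 : whitneyExt d P f x = 0 := by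
      rw [whitneyExt]
      calc ∑' t : ℕ × (Fin d → ℤ), avg volume (dyadicCube d t.1 t.2) f * P.psi t.1 t.2 x
          = ∑' _t : ℕ × (Fin d → ℤ), (0:ℝ) := tsum_congr hz
        _ = 0 := tsum_zero
    rw [hE0, abs_zero, Real.zero_rpow hp0.ne', ENNReal.ofReal_zero]
    exact zero_le
  case pos =>
    obtain ⟨t₀, ht₀⟩ := hS
    set K : Set ℕ := {k | ∃ m : Fin d → ℤ, x ∈ nnbhd d k m} with hK
    have hKne : K.Nonempty := ⟨t₀.1, t₀.2, ht₀⟩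
    set k₀ := sInf K with hk₀
    obtain ⟨m₀, hm₀⟩ : k₀ ∈ K := Nat.sInf_mem hKne
    set bb : Fin d → ℕ → ℤ := fun i k => ⌊x (Fin.castSucc i) * (2:ℝ)^k + 1/4⌋ with hbb
    set F₀ : Finset (ℕ × (Fin d → ℤ)) :=
      ({k₀, k₀+1} : Finset ℕ) ×ˢ Fintype.piFinset
        (fun i => ({bb i k₀ - 1, bb i k₀, bb i (k₀+1) - 1, bb i (k₀+1)} : Finset ℤ)) with hF₀
    set F : Finset (ℕ × (Fin d → ℤ)) := F₀.filter (fun t => x ∈ nnbhd d t.1 t.2) with hF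
    -- membership
    have hmemF : ∀ k m, x ∈ nnbhd d k m → (k, m) ∈ F := by
      intro k m hxkm
      rw [hF, Finset.mem_filter]
      refine ⟨?_, hxkm⟩
      rw [hF₀, Finset.mem_product]
      constructor
      · have hk1 : k₀ ≤ k := Nat.sInf_le ⟨m, hxkm⟩
        have hk2 : k ≤ k₀ + 1 := scale_comparison hm₀ hxkm
        simp only [Finset.mem_insert, Finset.mem_singleton]
        omega
      · rw [Fintype.mem_piFinset]
        intro i
        have hk1 : k₀ ≤ k := Nat.sInf_le ⟨m, hxkm⟩
        have hk2 : k ≤ k₀ + 1 := scale_comparison hm₀ hxkm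
        have hloc := index_localization hxkm i
        have hkc : k = k₀ ∨ k = k₀ + 1 := by omega
        simp only [Finset.mem_insert, Finset.mem_singleton]
        rcases hkc with rfl | rfl
        · rcases hloc with h | h
          · right; left; exact h
          · left; exact h
        · rcases hloc with h | h
          · right; right; right; exact h
          · right; right; left; exact h
    -- cardinality
    have hcard4 : ∀ (a1 a2 a3 a4 : ℤ), ({a1, a2, a3, a4} : Finset ℤ).card ≤ 4 := by
      intro a1 a2 a3 a4
      calc ({a1, a2, a3, a4} : Finset ℤ).card
          ≤ ({a2, a3, a4} : Finset ℤ).card + 1 := Finset.card_insert_le _ _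
        _ ≤ (({a3, a4} : Finset ℤ).card + 1) + 1 :=
            Nat.add_le_add_right (Finset.card_insert_le _ _) 1
        _ ≤ ((({a4} : Finset ℤ).card + 1) + 1) + 1 :=
            Nat.add_le_add_right (Nat.add_le_add_right (Finset.card_insert_le _ _) 1) 1
        _ ≤ 4 := by simp
    have hcardN : (F.card : ℝ) ≤ 2 * 4^d := by
      have h1 : F.card ≤ F₀.card := Finset.card_filter_le _ _
      have h2 : F₀.card ≤ 2 * 4^d := by
        rw [hF₀, Finset.card_product, Fintype.card_piFinset]
        apply Nat.mul_le_mul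
        · calc ({k₀, k₀+1} : Finset ℕ).card ≤ ({k₀+1} : Finset ℕ).card + 1 :=
              Finset.card_insert_le _ _
            _ ≤ 2 := by simp
        · calc ∏ i : Fin d, ({bb i k₀ - 1, bb i k₀, bb i (k₀+1) - 1, bb i (k₀+1)} : Finset ℤ).card
              ≤ 4 ^ (Finset.univ : Finset (Fin d)).card :=
                Finset.prod_le_pow_card _ _ 4 (fun i _ => hcard4 _ _ _ _)
            _ = 4 ^ d := by rw [Finset.card_univ, Fintype.card_fin]
      calc (F.card : ℝ) ≤ (F₀.card : ℝ) := by exact_mod_cast h1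
        _ ≤ ((2 * 4^d : ℕ) : ℝ) := by exact_mod_cast h2
        _ = 2 * 4^d := by push_cast; ring
    -- tsum reduces to sum over F
    have hzero : ∀ t : ℕ × (Fin d → ℤ), t ∉ F →
        avg volume (dyadicCube d t.1 t.2) f * P.psi t.1 t.2 x = 0 := by
      intro t htF
      have : P.psi t.1 t.2 x = 0 := by
        by_contra h
        exact htF (hmemF t.1 t.2 (P.support_subset t.1 t.2 x h))
      rw [this, mul_zero]
    have hEf : whitneyExt d P f x
        = ∑ t ∈ F, avg volume (dyadicCube d t.1 t.2) f * P.psi t.1 t.2 x := by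
      rw [whitneyExt]
      exact tsum_eq_sum hzero
    rcases Finset.eq_empty_or_nonempty F with hFe | hFne
    · rw [hEf, hFe, Finset.sum_empty, abs_zero, Real.zero_rpow hp0.ne', ENNReal.ofReal_zero]
      exact zero_le
    · set M := F.sup' hFne a with hM
      obtain ⟨t₁, ht₁F, ht₁⟩ := Finset.exists_mem_eq_sup' hFne a
      have hM0 : 0 ≤ M := by rw [hM, ht₁]; exact abs_nonneg _
      have habs : |whitneyExt d P f x| ≤ (F.card : ℝ) * M := by
        rw [hEf]
        refine le_trans (Finset.abs_sum_le_sum_abs _ _) ?_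
        refine le_trans (Finset.sum_le_card_nsmul F _ M ?_) (le_of_eq (nsmul_eq_mul _ _))
        intro t htF
        have h1 : |P.psi t.1 t.2 x| ≤ 1 := by
          rw [abs_of_nonneg (P.nonneg _ _ _)]
          exact P.le_one _ _ _
        calc |avg volume (dyadicCube d t.1 t.2) f * P.psi t.1 t.2 x|
            = a t * |P.psi t.1 t.2 x| := by rw [abs_mul]
          _ ≤ a t * 1 := mul_le_mul_of_nonneg_left h1 (abs_nonneg _)
          _ = a t := mul_one _
          _ ≤ M := Finset.le_sup' a htF
      have hfinal : |whitneyExt d P f x| ^ p ≤ ((2:ℝ) * 4^d)^p * ∑ t ∈ F, a t ^ p := by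
        calc |whitneyExt d P f x| ^ p ≤ (((2:ℝ) * 4^d) * M) ^ p := by
              apply Real.rpow_le_rpow (abs_nonneg _) _ hp0.le
              exact le_trans habs (mul_le_mul_of_nonneg_right hcardN hM0)
          _ = ((2:ℝ) * 4^d)^p * M^p := Real.mul_rpow (by positivity) hM0
          _ ≤ _ := by
              apply mul_le_mul_of_nonneg_left _ (Real.rpow_nonneg (by positivity) p)
              rw [hM, ht₁]
              exact Finset.single_le_sum (f := fun t => a t ^ p)
                (fun t _ => Real.rpow_nonneg (abs_nonneg _) p) ht₁F
      refine le_trans (ENNReal.ofReal_le_ofReal hfinal) ?_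
      rw [ENNReal.ofReal_mul (by positivity),
        ENNReal.ofReal_sum_of_nonneg (fun t _ => Real.rpow_nonneg (abs_nonneg _) p)]
      apply mul_le_mul_right
      calc ∑ t ∈ F, ENNReal.ofReal (a t ^ p)
          = ∑ t ∈ F, ENNReal.ofReal (a t ^ p) * (nnbhd d t.1 t.2).indicator 1 x := by
            refine Finset.sum_congr rfl (fun t htF => ?_)
            rw [Set.indicator_of_mem ((Finset.mem_filter.mp htF).2), Pi.one_apply, mul_one]
        _ ≤ _ := ENNReal.sum_le_tsum F


end Stmt5Aux

/-- the `L^p(μ_α)`-estimate for the Whitney extension. -/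
theorem stmt5 (d : ℕ) (hd : 1 ≤ d) (p α : ℝ) (hp : 1 ≤ p) (hα : -1 < α) (hαp : α < p - 1)
    (L : ℝ≥0) (P : WhitneyPOU d L) :
    ∃ C C' : ℝ, 0 < C ∧ 0 < C' ∧ ∀ f : Rd d → ℝ, LocallyIntegrable f volume →
      besovNorm d (1 - (α+1)/p) p (ENNReal.ofReal p) volume f < ∞ →
      (∫⁻ x, ENNReal.ofReal (|whitneyExt d P f x| ^ p) ∂(muAlpha d α) ≤
          ENNReal.ofReal C *
            ∑' k : ℕ, ENNReal.ofReal ((2:ℝ) ^ (-(k:ℝ) * (α+1))) *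
              (eLpNorm f (ENNReal.ofReal p) volume) ^ p) ∧
      ENNReal.ofReal C *
          ∑' k : ℕ, ENNReal.ofReal ((2:ℝ) ^ (-(k:ℝ) * (α+1))) *
            (eLpNorm f (ENNReal.ofReal p) volume) ^ p ≤
        ENNReal.ofReal C' * (eLpNorm f (ENNReal.ofReal p) volume) ^ p := by
  have hp0 : (0:ℝ) < p := lt_of_lt_of_le one_pos hp
  have hα1 : 0 < α + 1 := by linarith
  set cα := max ((3/4:ℝ)^α) ((9/4:ℝ)^α) with hcα
  have hcα0 : 0 < cα := lt_max_of_lt_left (Real.rpow_pos_of_pos (by norm_num) α)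
  set c₁ := cα * (3/2:ℝ)^(d+1) with hc₁
  have hc₁0 : 0 < c₁ := by positivity
  have hN0 : (0:ℝ) < (2:ℝ) * 4^d := by positivity
  set r := (2:ℝ)^(-(α+1)) with hr
  have hr0 : 0 < r := Real.rpow_pos_of_pos two_pos _
  have hr1 : r < 1 := Real.rpow_lt_one_of_one_lt_of_neg one_lt_two (by linarith)
  set C := ((2:ℝ) * 4^d)^p * c₁ with hC
  have hC0 : 0 < C := mul_pos (Real.rpow_pos_of_pos hN0 p) hc₁0
  have hgeom : ∀ k : ℕ, (2:ℝ) ^ (-(k:ℝ) * (α+1)) = r ^ k := by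
    intro k
    rw [hr, ← Real.rpow_natCast ((2:ℝ)^(-(α+1))) k, ← Real.rpow_mul (by norm_num)]
    ring_nf
  refine ⟨C, C * (1-r)⁻¹, hC0, mul_pos hC0 (inv_pos.mpr (by linarith)), ?_⟩
  intro f hf _hb
  set X := (eLpNorm f (ENNReal.ofReal p) volume) ^ p with hX
  constructor
  · -- the main estimate
    set Itot := ∫⁻ y, (‖f y‖₊ : ℝ≥0∞) ^ p ∂(volume : Measure (Rd d)) with hItot
    have hpne : (ENNReal.ofReal p) ≠ 0 := by
      simp only [ne_eq, ENNReal.ofReal_eq_zero, not_le]; linarith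
    have hIX : X = Itot := by
      rw [hX, eLpNorm_eq_lintegral_rpow_enorm_toReal hpne ENNReal.ofReal_ne_top,
        ENNReal.toReal_ofReal hp0.le, ← ENNReal.rpow_mul, one_div_mul_cancel hp0.ne',
        ENNReal.rpow_one]
      rfl
    have hmeasg : ∀ t : ℕ × (Fin d → ℤ), Measurable fun y : Rd (d+1) =>
        ENNReal.ofReal (|avg volume (dyadicCube d t.1 t.2) f| ^ p) *
          (nnbhd d t.1 t.2).indicator 1 y :=
      fun t => ((measurable_const.indicator
        (Stmt5Aux.isOpen_nnbhd d t.1 t.2).measurableSet)).const_mul _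
    have stepA : ∫⁻ y, ENNReal.ofReal (|whitneyExt d P f y| ^ p) ∂(muAlpha d α)
        ≤ ENNReal.ofReal (((2:ℝ) * 4^d) ^ p) * ∑' t : ℕ × (Fin d → ℤ),
            ENNReal.ofReal (|avg volume (dyadicCube d t.1 t.2) f| ^ p) *
              (muAlpha d α) (nnbhd d t.1 t.2) := by
      calc ∫⁻ y, ENNReal.ofReal (|whitneyExt d P f y| ^ p) ∂(muAlpha d α)
          ≤ ∫⁻ y, ENNReal.ofReal (((2:ℝ) * 4^d) ^ p) *
              ∑' t : ℕ × (Fin d → ℤ),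
                ENNReal.ofReal (|avg volume (dyadicCube d t.1 t.2) f| ^ p) *
                  (nnbhd d t.1 t.2).indicator 1 y ∂(muAlpha d α) :=
            lintegral_mono (fun y => Stmt5Aux.pointwise_bound d P f hp y)
        _ = ENNReal.ofReal (((2:ℝ) * 4^d) ^ p) * ∫⁻ y, ∑' t : ℕ × (Fin d → ℤ),
              ENNReal.ofReal (|avg volume (dyadicCube d t.1 t.2) f| ^ p) *
                (nnbhd d t.1 t.2).indicator 1 y ∂(muAlpha d α) :=
            lintegral_const_mul' _ _ ENNReal.ofReal_ne_top
        _ = ENNReal.ofReal (((2:ℝ) * 4^d) ^ p) * ∑' t : ℕ × (Fin d → ℤ),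
              ∫⁻ y, ENNReal.ofReal (|avg volume (dyadicCube d t.1 t.2) f| ^ p) *
                (nnbhd d t.1 t.2).indicator 1 y ∂(muAlpha d α) := by
            rw [lintegral_tsum (fun t => (hmeasg t).aemeasurable)]
        _ = _ := by
            congr 1
            refine tsum_congr (fun t => ?_)
            rw [lintegral_const_mul' _ _ ENNReal.ofReal_ne_top,
              lintegral_indicator_one (Stmt5Aux.isOpen_nnbhd d t.1 t.2).measurableSet]
    have stepB : ∀ (k : ℕ) (m : Fin d → ℤ),
        ENNReal.ofReal (|avg volume (dyadicCube d k m) f| ^ p) * (muAlpha d α) (nnbhd d k m)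
        ≤ ENNReal.ofReal c₁ * ENNReal.ofReal ((2:ℝ) ^ (-(k:ℝ) * (α+1))) *
            ∫⁻ y in dyadicCube d (k:ℤ) m, (‖f y‖₊ : ℝ≥0∞) ^ p ∂volume := by
      intro k m
      have hμ := Stmt5Aux.muAlpha_nnbhd_le d α k m
      have hsc : (max ((3/4:ℝ)^α) ((9/4:ℝ)^α) * (3/2:ℝ)^(d+1)) *
          (((2:ℝ)^(-(k:ℤ)))^α * (2:ℝ)^(-(k:ℤ)))
          = c₁ * (2:ℝ) ^ (-(k:ℝ) * (α+1)) := by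
        rw [hc₁, hcα]
        congr 1
        rw [show ((2:ℝ)^(-(k:ℤ))) = (2:ℝ)^((-(k:ℤ) : ℤ) : ℝ) by rw [Real.rpow_intCast],
          ← Real.rpow_mul (by norm_num), ← Real.rpow_add two_pos]
        congr 1
        push_cast
        ring
      calc ENNReal.ofReal (|avg volume (dyadicCube d k m) f| ^ p) * (muAlpha d α) (nnbhd d k m)
          ≤ ENNReal.ofReal (|avg volume (dyadicCube d k m) f| ^ p) *
              (ENNReal.ofReal (c₁ * (2:ℝ) ^ (-(k:ℝ) * (α+1))) *
                ENNReal.ofReal (((2:ℝ)^(-(k:ℤ)))^d)) := by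
            apply mul_le_mul_right
            rw [← hsc]
            exact hμ
        _ = ENNReal.ofReal c₁ * ENNReal.ofReal ((2:ℝ) ^ (-(k:ℝ) * (α+1))) *
              (ENNReal.ofReal (|avg volume (dyadicCube d k m) f| ^ p) *
                ENNReal.ofReal (((2:ℝ)^(-(k:ℤ)))^d)) := by
            rw [ENNReal.ofReal_mul hc₁0.le]
            ring
        _ ≤ _ := by
            apply mul_le_mul_right
            rw [← Stmt5Aux.volume_dyadicCube d (k:ℤ) m]
            exact Stmt5Aux.avg_pow_le hf hp (k:ℤ) m
    have stepC : ∑' t : ℕ × (Fin d → ℤ),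
          ENNReal.ofReal (|avg volume (dyadicCube d t.1 t.2) f| ^ p) *
            (muAlpha d α) (nnbhd d t.1 t.2)
        ≤ ∑' k : ℕ, ENNReal.ofReal c₁ *
            (ENNReal.ofReal ((2:ℝ) ^ (-(k:ℝ) * (α+1))) * Itot) := by
      rw [ENNReal.tsum_prod (f := fun (k : ℕ) (m : Fin d → ℤ) =>
        ENNReal.ofReal (|avg volume (dyadicCube d (k:ℤ) m) f| ^ p) *
          (muAlpha d α) (nnbhd d k m))]
      refine ENNReal.tsum_le_tsum (fun k => ?_)
      calc ∑' m : Fin d → ℤ,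
            ENNReal.ofReal (|avg volume (dyadicCube d k m) f| ^ p) *
              (muAlpha d α) (nnbhd d k m)
          ≤ ∑' m : Fin d → ℤ, ENNReal.ofReal c₁ * ENNReal.ofReal ((2:ℝ) ^ (-(k:ℝ) * (α+1))) *
              ∫⁻ y in dyadicCube d (k:ℤ) m, (‖f y‖₊ : ℝ≥0∞) ^ p ∂volume :=
            ENNReal.tsum_le_tsum (fun m => stepB k m)
        _ = ENNReal.ofReal c₁ * ENNReal.ofReal ((2:ℝ) ^ (-(k:ℝ) * (α+1))) *
              ∑' m : Fin d → ℤ, ∫⁻ y in dyadicCube d (k:ℤ) m, (‖f y‖₊ : ℝ≥0∞) ^ p ∂volume :=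
            ENNReal.tsum_mul_left
        _ ≤ ENNReal.ofReal c₁ * ENNReal.ofReal ((2:ℝ) ^ (-(k:ℝ) * (α+1))) * Itot := by
            apply mul_le_mul_right
            calc ∑' m : Fin d → ℤ, ∫⁻ y in dyadicCube d (k:ℤ) m, (‖f y‖₊ : ℝ≥0∞) ^ p ∂volume
                = ∫⁻ y in ⋃ m : Fin d → ℤ, dyadicCube d (k:ℤ) m, (‖f y‖₊ : ℝ≥0∞) ^ p ∂volume :=
                  (lintegral_iUnion (fun m => Stmt5Aux.measurableSet_dyadicCube d (k:ℤ) m)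
                    (fun m m' hmm' => Stmt5Aux.dyadicCube_disjoint d (k:ℤ) hmm') _).symm
              _ ≤ Itot := setLIntegral_le_lintegral _ _
        _ = ENNReal.ofReal c₁ * (ENNReal.ofReal ((2:ℝ) ^ (-(k:ℝ) * (α+1))) * Itot) :=
            mul_assoc _ _ _
    calc ∫⁻ y, ENNReal.ofReal (|whitneyExt d P f y| ^ p) ∂(muAlpha d α)
        ≤ ENNReal.ofReal (((2:ℝ) * 4^d) ^ p) * ∑' k : ℕ, ENNReal.ofReal c₁ *
            (ENNReal.ofReal ((2:ℝ) ^ (-(k:ℝ) * (α+1))) * Itot) :=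
          le_trans stepA (mul_le_mul_right stepC _)
      _ = ENNReal.ofReal C * ∑' k : ℕ, ENNReal.ofReal ((2:ℝ) ^ (-(k:ℝ) * (α+1))) * X := by
          simp_rw [hIX]
          rw [ENNReal.tsum_mul_left, ← mul_assoc]
          congr 1
          rw [hC]
          exact (ENNReal.ofReal_mul (by positivity)).symm
  · -- geometric series bound
    have hsum : ∑' k : ℕ, ENNReal.ofReal ((2:ℝ) ^ (-(k:ℝ) * (α+1))) * X
        = ENNReal.ofReal ((1-r)⁻¹) * X := by
      rw [ENNReal.tsum_mul_right]
      congr 1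
      simp_rw [hgeom]
      rw [← ENNReal.ofReal_tsum_of_nonneg (fun k => pow_nonneg hr0.le k)
        (summable_geometric_of_lt_one hr0.le hr1), tsum_geometric_of_lt_one hr0.le hr1]
    rw [hsum, ← mul_assoc, ← ENNReal.ofReal_mul hC0.le]
end
end

section
/- Let n ≥ 1 and α > −n. For every x ∈ ℝ^d × {0}ⁿ ⊂ ℝ^{d+n} and 0 < r ≤ 1, the measure μ_α(B(x,r)) is comparable to r^{d+n+α}, where μ_α has density min(1, dist(y, ℝ^d × {0}ⁿ))^α with respect to Lebesgue measure on ℝ^{d+n}, with constants depending only on d, n, α. -/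
open MeasureTheory ENNReal Set Metric Filter
open scoped NNReal Classical

noncomputable section

/-- The measure on `ℝ^{d+n}` (as a product space) with density
`min(1, dist(y, ℝ^d × {0}ⁿ))^α = min(1,‖y₂‖)^α`. -/
def muAlphaN (d n : ℕ) (α : ℝ) : Measure ((Fin d → ℝ) × (Fin n → ℝ)) :=
  volume.withDensity fun p => ENNReal.ofReal ((min 1 ‖p.2‖) ^ α)


/-- Auxiliary: powers of `1/2` as real powers of `2`. -/
lemma stmt17_half_pow (k : ℕ) : ((2:ℝ)⁻¹) ^ k = (2:ℝ) ^ (-(k:ℝ)) := by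
  rw [inv_pow, ← Real.rpow_natCast (2:ℝ) k, ← Real.rpow_neg (by norm_num)]

lemma stmt17_key_alg (n : ℕ) (α : ℝ) {r : ℝ} (hr : 0 < r) (j : ℕ) :
    ((r * (2⁻¹:ℝ)^(j+1))^α * (2*(r*(2⁻¹:ℝ)^j))^n : ℝ)
      = ((2:ℝ)^((n:ℝ)-α) * r^((n:ℝ)+α)) * ((2:ℝ)^(-((n:ℝ)+α)))^j := by
  have h2 : (0:ℝ) < 2 := two_pos
  rw [stmt17_half_pow, stmt17_half_pow]
  push_cast
  rw [Real.mul_rpow hr.le (by positivity), mul_pow, mul_pow,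
    ← Real.rpow_natCast ((2:ℝ)^(-(j:ℝ))) n, ← Real.rpow_natCast ((2:ℝ)^(-((n:ℝ)+α))) j,
    ← Real.rpow_natCast (2:ℝ) n, ← Real.rpow_natCast r n,
    ← Real.rpow_mul h2.le, ← Real.rpow_mul h2.le, ← Real.rpow_mul h2.le]
  simp only [Real.rpow_def_of_pos h2, Real.rpow_def_of_pos hr, ← Real.exp_add]
  congr 1
  ring

lemma stmt17_factor (d n : ℕ) (α : ℝ) (x : Fin d → ℝ) {r : ℝ} (hr : 0 < r) :
    muAlphaN d n α (ball ((x, (0 : Fin n → ℝ))) r)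
      = ENNReal.ofReal ((2*r)^d) *
          ∫⁻ z in ball (0 : Rd n) r, ENNReal.ofReal ((min 1 ‖z‖) ^ α) := by
  rw [muAlphaN, withDensity_apply _ measurableSet_ball, ← ball_prod_same, Measure.volume_eq_prod,
    ← Measure.prod_restrict]
  rw [MeasureTheory.lintegral_prod _ (by fun_prop)]
  simp only [lintegral_const, Measure.restrict_apply_univ]
  rw [Real.volume_pi_ball _ hr, Fintype.card_fin, mul_comm]

lemma stmt17_lower_bound (n : ℕ) (hn : 1 ≤ n) (α : ℝ) {r : ℝ} (hr : 0 < r) (hr1 : r ≤ 1) :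
    ENNReal.ofReal ((min ((4:ℝ)^(-α) / 2^n) ((2:ℝ)^n)) * r ^ ((n:ℝ) + α)) ≤
      ∫⁻ z in ball (0 : Rd n) r, ENNReal.ofReal ((min 1 ‖z‖) ^ α) := by
  haveI : Nonempty (Fin n) := ⟨⟨0, hn⟩⟩
  rcases le_or_gt 0 α with hα | hα
  · set w : Rd n := fun _ => r/2 with hw
    have hwn : ‖w‖ = r/2 := by
      rw [hw, pi_norm_const, Real.norm_eq_abs, abs_of_pos (by linarith : (0:ℝ) < r/2)]
    have hsub : ball w (r/4) ⊆ ball (0 : Rd n) r := by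
      intro z hz
      rw [mem_ball_zero_iff]
      calc ‖z‖ ≤ ‖w‖ + ‖z - w‖ := by
            have := norm_sub_norm_le z w; nlinarith [norm_nonneg (z - w)]
        _ < r/2 + r/4 := by
            rw [hwn]; have := mem_ball_iff_norm.mp hz; linarith
        _ < r := by linarith
    have hlow : ∀ z ∈ ball w (r/4),
        ENNReal.ofReal ((r/4)^α) ≤ ENNReal.ofReal ((min 1 ‖z‖) ^ α) := by
      intro z hz
      apply ENNReal.ofReal_le_ofReal
      apply Real.rpow_le_rpow (by positivity) _ hα
      have h1 : r/4 ≤ ‖z‖ := by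
        have : ‖z‖ ≥ ‖w‖ - ‖w - z‖ := by linarith [norm_sub_norm_le w z]
        rw [hwn] at this
        have hz' : ‖w - z‖ < r/4 := by rwa [norm_sub_rev, ← mem_ball_iff_norm]
        linarith
      exact le_min (by linarith) h1
    calc ENNReal.ofReal ((min ((4:ℝ)^(-α) / 2^n) ((2:ℝ)^n)) * r ^ ((n:ℝ) + α))
        ≤ ENNReal.ofReal ((r/4)^α * (2*(r/4))^n) := by
          apply ENNReal.ofReal_le_ofReal
          have he : (r/4)^α * (2*(r/4))^n = ((4:ℝ)^(-α) / 2^n) * r ^ ((n:ℝ) + α) := by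
            rw [Real.div_rpow hr.le (by norm_num), Real.rpow_neg (by norm_num)]
            have h24 : (2*(r/4)) = r/2 := by ring
            rw [h24, div_pow, Real.rpow_add hr, ← Real.rpow_natCast r n]
            ring
          rw [he]
          apply mul_le_mul_of_nonneg_right (min_le_left _ _) (by positivity)
      _ ≤ ENNReal.ofReal ((r/4)^α) * volume (ball w (r/4)) := by
          rw [Real.volume_pi_ball _ (by linarith), Fintype.card_fin,
            ← ENNReal.ofReal_mul (by positivity)]
      _ = ∫⁻ _ in ball w (r/4), ENNReal.ofReal ((r/4)^α) := by rw [setLIntegral_const]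
      _ ≤ ∫⁻ z in ball w (r/4), ENNReal.ofReal ((min 1 ‖z‖) ^ α) :=
          setLIntegral_mono (by fun_prop) hlow
      _ ≤ _ := lintegral_mono_set hsub
  · have hball : volume (ball (0:Rd n) r \ {0}) = ENNReal.ofReal ((2*r)^n) := by
      rw [measure_diff_null (measure_singleton _), Real.volume_pi_ball _ hr, Fintype.card_fin]
    have hlow : ∀ z ∈ ball (0:Rd n) r \ {0},
        ENNReal.ofReal (r^α) ≤ ENNReal.ofReal ((min 1 ‖z‖) ^ α) := by
      intro z hz
      have hz0 : 0 < ‖z‖ := norm_pos_iff.mpr (fun h => hz.2 (by simpa using h))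
      have hzr : ‖z‖ < r := mem_ball_zero_iff.mp hz.1
      rw [min_eq_right (by linarith)]
      exact ENNReal.ofReal_le_ofReal
        (Real.rpow_le_rpow_of_nonpos hz0 hzr.le hα.le)
    calc ENNReal.ofReal ((min ((4:ℝ)^(-α) / 2^n) ((2:ℝ)^n)) * r ^ ((n:ℝ) + α))
        ≤ ENNReal.ofReal (r^α * (2*r)^n) := by
          apply ENNReal.ofReal_le_ofReal
          have he : r^α * (2*r)^n = (2:ℝ)^n * r ^ ((n:ℝ) + α) := by
            rw [mul_pow, Real.rpow_add hr, ← Real.rpow_natCast r n]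
            ring
          rw [he]
          apply mul_le_mul_of_nonneg_right (min_le_right _ _) (by positivity)
      _ = ENNReal.ofReal (r^α) * volume (ball (0:Rd n) r \ {0}) := by
          rw [hball, ← ENNReal.ofReal_mul (by positivity)]
      _ = ∫⁻ _ in ball (0:Rd n) r \ {0}, ENNReal.ofReal (r^α) := by rw [setLIntegral_const]
      _ ≤ ∫⁻ z in ball (0:Rd n) r \ {0}, ENNReal.ofReal ((min 1 ‖z‖) ^ α) :=
          setLIntegral_mono (by fun_prop) hlow
      _ ≤ _ := lintegral_mono_set diff_subset

lemma stmt17_upper_bound (n : ℕ) (hn : 1 ≤ n) (α : ℝ) (hα : -(n:ℝ) < α) {r : ℝ} (hr : 0 < r)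
    (hr1 : r ≤ 1) :
    ∫⁻ z in ball (0 : Rd n) r, ENNReal.ofReal ((min 1 ‖z‖) ^ α) ≤
      ENNReal.ofReal ((max ((2:ℝ)^n)
        ((2:ℝ)^((n:ℝ)-α) * (1 - (2:ℝ)^(-((n:ℝ)+α)))⁻¹)) * r ^ ((n:ℝ) + α)) := by
  haveI : Nonempty (Fin n) := ⟨⟨0, hn⟩⟩
  have hna : (0:ℝ) < (n:ℝ) + α := by linarith
  rcases le_or_gt 0 α with hα0 | hα0
  · have hbd : ∀ z ∈ ball (0 : Rd n) r,
        ENNReal.ofReal ((min 1 ‖z‖) ^ α) ≤ ENNReal.ofReal (r ^ α) := by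
      intro z hz
      apply ENNReal.ofReal_le_ofReal
      apply Real.rpow_le_rpow (le_min zero_le_one (norm_nonneg z)) _ hα0
      exact le_trans (min_le_right _ _) (mem_ball_zero_iff.mp hz).le
    calc ∫⁻ z in ball (0 : Rd n) r, ENNReal.ofReal ((min 1 ‖z‖) ^ α)
        ≤ ∫⁻ _ in ball (0 : Rd n) r, ENNReal.ofReal (r ^ α) :=
          setLIntegral_mono measurable_const hbd
      _ = ENNReal.ofReal (r ^ α) * volume (ball (0 : Rd n) r) := setLIntegral_const _ _
      _ = ENNReal.ofReal (r ^ α * (2*r)^n) := by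
          rw [Real.volume_pi_ball _ hr, Fintype.card_fin, ← ENNReal.ofReal_mul (by positivity)]
      _ ≤ _ := by
          apply ENNReal.ofReal_le_ofReal
          have he : r^α * (2*r)^n = (2:ℝ)^n * r ^ ((n:ℝ) + α) := by
            rw [mul_pow, Real.rpow_add hr, ← Real.rpow_natCast r n]; ring
          rw [he]
          exact mul_le_mul_of_nonneg_right (le_max_left _ _) (by positivity)
  · set A : ℕ → Set (Rd n) := fun j => ball 0 (r*(2⁻¹:ℝ)^j) \ ball 0 (r*(2⁻¹:ℝ)^(j+1)) with hA
    have cover : ball (0 : Rd n) r ⊆ {0} ∪ ⋃ j, A j := by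
      intro z hz
      by_cases h0 : z = (0 : Rd n)
      · exact Or.inl (by simp [h0])
      right
      have hz0 : 0 < ‖z‖ := norm_pos_iff.mpr h0
      have hzr : ‖z‖ < r := mem_ball_zero_iff.mp hz
      have hex : ∃ k : ℕ, r * (2⁻¹:ℝ)^(k+1) ≤ ‖z‖ := by
        obtain ⟨k, hk⟩ := exists_pow_lt_of_lt_one (div_pos hz0 hr) (by norm_num : (2⁻¹:ℝ) < 1)
        refine ⟨k, ?_⟩
        have h1 : ((2:ℝ)⁻¹)^(k+1) ≤ (2⁻¹:ℝ)^k :=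
          pow_le_pow_of_le_one (by norm_num) (by norm_num) (Nat.le_succ k)
        have h2 : (2⁻¹:ℝ)^k * r < ‖z‖ := (lt_div_iff₀ hr).mp hk
        nlinarith
      set j := Nat.find hex with hj
      have hspec : r * (2⁻¹:ℝ)^(j+1) ≤ ‖z‖ := Nat.find_spec hex
      have hup : ‖z‖ < r * (2⁻¹:ℝ)^j := by
        rcases Nat.eq_zero_or_pos j with h | h
        · rw [h]; simpa using hzr
        · have hmin := Nat.find_min hex (Nat.sub_lt h one_pos)
          push_neg at hmin
          have hj1 : j - 1 + 1 = j := Nat.succ_pred_eq_of_pos h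
          rwa [hj1] at hmin
      exact mem_iUnion.mpr ⟨j, mem_ball_zero_iff.mpr hup,
        fun hmem => absurd (mem_ball_zero_iff.mp hmem) (not_lt.mpr hspec)⟩
    have hshell : ∀ j : ℕ, ∫⁻ z in A j, ENNReal.ofReal ((min 1 ‖z‖) ^ α) ≤
        ENNReal.ofReal (((2:ℝ)^((n:ℝ)-α) * r^((n:ℝ)+α)) * ((2:ℝ)^(-((n:ℝ)+α)))^j) := by
      intro j
      have hrj : (0:ℝ) < r * (2⁻¹:ℝ)^j := by positivity
      have hrj1 : (0:ℝ) < r * (2⁻¹:ℝ)^(j+1) := by positivity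
      have hbd : ∀ z ∈ A j, ENNReal.ofReal ((min 1 ‖z‖) ^ α) ≤
          ENNReal.ofReal ((r * (2⁻¹:ℝ)^(j+1))^α) := by
        intro z hz
        have h1 : r * (2⁻¹:ℝ)^(j+1) ≤ ‖z‖ := not_lt.mp (fun h => hz.2 (mem_ball_zero_iff.mpr h))
        have h2 : ‖z‖ < r * (2⁻¹:ℝ)^j := mem_ball_zero_iff.mp hz.1
        have h3 : ‖z‖ ≤ 1 := by
          have : r * (2⁻¹:ℝ)^j ≤ r * 1 := by
            apply mul_le_mul_of_nonneg_left _ hr.le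
            exact pow_le_one₀ (by norm_num) (by norm_num)
          linarith
        rw [min_eq_right h3]
        exact ENNReal.ofReal_le_ofReal (Real.rpow_le_rpow_of_nonpos hrj1 h1 hα0.le)
      calc ∫⁻ z in A j, ENNReal.ofReal ((min 1 ‖z‖) ^ α)
          ≤ ∫⁻ _ in A j, ENNReal.ofReal ((r * (2⁻¹:ℝ)^(j+1))^α) :=
            setLIntegral_mono measurable_const hbd
        _ = ENNReal.ofReal ((r * (2⁻¹:ℝ)^(j+1))^α) * volume (A j) := setLIntegral_const _ _
        _ ≤ ENNReal.ofReal ((r * (2⁻¹:ℝ)^(j+1))^α) * volume (ball (0:Rd n) (r*(2⁻¹:ℝ)^j)) :=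
            mul_le_mul_right (measure_mono diff_subset) _
        _ = ENNReal.ofReal ((r * (2⁻¹:ℝ)^(j+1))^α * (2*(r*(2⁻¹:ℝ)^j))^n) := by
            rw [Real.volume_pi_ball _ hrj, Fintype.card_fin,
              ← ENNReal.ofReal_mul (by positivity)]
        _ = _ := by rw [stmt17_key_alg n α hr j]
    have hq : (0:ℝ) < (2:ℝ)^(-((n:ℝ)+α)) := by positivity
    have hq1 : (2:ℝ)^(-((n:ℝ)+α)) < 1 :=
      Real.rpow_lt_one_of_one_lt_of_neg one_lt_two (by linarith)
    calc ∫⁻ z in ball (0 : Rd n) r, ENNReal.ofReal ((min 1 ‖z‖) ^ α)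
        ≤ ∫⁻ z in ({0} ∪ ⋃ j, A j), ENNReal.ofReal ((min 1 ‖z‖) ^ α) :=
          lintegral_mono_set cover
      _ ≤ (∫⁻ z in ({0}:Set (Rd n)), ENNReal.ofReal ((min 1 ‖z‖) ^ α)) +
          ∫⁻ z in (⋃ j, A j), ENNReal.ofReal ((min 1 ‖z‖) ^ α) := lintegral_union_le _ _ _
      _ = ∫⁻ z in (⋃ j, A j), ENNReal.ofReal ((min 1 ‖z‖) ^ α) := by
          rw [setLIntegral_measure_zero _ _ (measure_singleton _), zero_add]
      _ ≤ ∑' j, ∫⁻ z in A j, ENNReal.ofReal ((min 1 ‖z‖) ^ α) := lintegral_iUnion_le _ _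
      _ ≤ ∑' j, ENNReal.ofReal (((2:ℝ)^((n:ℝ)-α) * r^((n:ℝ)+α)) * ((2:ℝ)^(-((n:ℝ)+α)))^j) :=
          ENNReal.tsum_le_tsum hshell
      _ = ENNReal.ofReal ((2:ℝ)^((n:ℝ)-α) * r^((n:ℝ)+α)) *
          ∑' j, (ENNReal.ofReal ((2:ℝ)^(-((n:ℝ)+α))))^j := by
          rw [← ENNReal.tsum_mul_left]
          congr 1 with j
          rw [← ENNReal.ofReal_pow hq.le, ← ENNReal.ofReal_mul (by positivity)]
      _ = ENNReal.ofReal ((2:ℝ)^((n:ℝ)-α) * r^((n:ℝ)+α)) *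
          ENNReal.ofReal ((1 - (2:ℝ)^(-((n:ℝ)+α)))⁻¹) := by
          rw [ENNReal.tsum_geometric, ← ENNReal.ofReal_one, ← ENNReal.ofReal_sub _ hq.le,
            ENNReal.ofReal_inv_of_pos (by linarith)]
      _ ≤ _ := by
          rw [← ENNReal.ofReal_mul (by positivity)]
          apply ENNReal.ofReal_le_ofReal
          have he : (2:ℝ)^((n:ℝ)-α) * r^((n:ℝ)+α) * (1 - (2:ℝ)^(-((n:ℝ)+α)))⁻¹
              = ((2:ℝ)^((n:ℝ)-α) * (1 - (2:ℝ)^(-((n:ℝ)+α)))⁻¹) * r^((n:ℝ)+α) := by ring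
          rw [he]
          exact mul_le_mul_of_nonneg_right (le_max_right _ _) (by positivity)

/-- `μ_α(B((x,0),r)) ≈ r^{d+n+α}` for `x ∈ ℝ^d × {0}ⁿ` and `0 < r ≤ 1`. -/
theorem stmt17 (d n : ℕ) (hd : 1 ≤ d) (hn : 1 ≤ n) (α : ℝ) (hα : -(n:ℝ) < α) :
    ∃ c C : ℝ, 0 < c ∧ 0 < C ∧ ∀ (x : Fin d → ℝ) (r : ℝ), 0 < r → r ≤ 1 →
      ENNReal.ofReal (c * r ^ ((d:ℝ) + (n:ℝ) + α)) ≤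
          muAlphaN d n α (ball ((x, (0 : Fin n → ℝ))) r) ∧
      muAlphaN d n α (ball ((x, (0 : Fin n → ℝ))) r) ≤
          ENNReal.ofReal (C * r ^ ((d:ℝ) + (n:ℝ) + α)) := by
  set c2 : ℝ := min ((4:ℝ)^(-α) / 2^n) ((2:ℝ)^n) with hc2
  set C2 : ℝ := max ((2:ℝ)^n) ((2:ℝ)^((n:ℝ)-α) * (1 - (2:ℝ)^(-((n:ℝ)+α)))⁻¹) with hC2
  have hc2pos : 0 < c2 := lt_min (by positivity) (by positivity)
  have hC2pos : 0 < C2 := lt_of_lt_of_le (by positivity : (0:ℝ) < (2:ℝ)^n) (le_max_left _ _)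
  refine ⟨2^d * c2, 2^d * C2, by positivity, by positivity, ?_⟩
  intro x r hr hr1
  have hfac := stmt17_factor d n α x hr
  have hexp : (2*r)^d * (c2 * r^((n:ℝ)+α)) = (2^d * c2) * r^((d:ℝ)+(n:ℝ)+α) := by
    rw [mul_pow, ← Real.rpow_natCast r d,
      show ((d:ℝ)+(n:ℝ)+α) = ((d:ℝ)+((n:ℝ)+α)) by ring]
    simp only [Real.rpow_add hr]
    ring
  have hexpC : (2*r)^d * (C2 * r^((n:ℝ)+α)) = (2^d * C2) * r^((d:ℝ)+(n:ℝ)+α) := by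
    rw [mul_pow, ← Real.rpow_natCast r d,
      show ((d:ℝ)+(n:ℝ)+α) = ((d:ℝ)+((n:ℝ)+α)) by ring]
    simp only [Real.rpow_add hr]
    ring
  constructor
  · rw [hfac, ← hexp, ENNReal.ofReal_mul (by positivity)]
    exact mul_le_mul_right (stmt17_lower_bound n hn α hr hr1) _
  · rw [hfac, ← hexpC, ENNReal.ofReal_mul (by positivity)]
    exact mul_le_mul_right (stmt17_upper_bound n hn α hα hr hr1) _
end
end
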